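/- arXiv:1910.12472 — 6 statements merged into one kernel-verified Lean document; each statement's English description precedes it below -/
import Mathlib

section
/- Let h > 0, θ ∈ (−π/2, π/2), ω = 2π, m a nonnegative integer, μ_{m+1} = (m+1)²ω²cos θ, and let ā : [0,h] → ℓ¹ be continuous with ‖ā‖_X = sup_{t∈[0,h]} ‖ā(t)‖_{ℓ¹} and 2‖ā‖_X ≠ μ_{m+1}. For 0 ≤ s ≤ t ≤ h define W^∞(t,s) = exp(−μ_{m+1}(t−s) + 2∫_s^t ‖ā(τ)‖_{ℓ¹} dτ), W_∞ = (exp((2‖ā‖_X − μ_{m+1})h) − 1)/(2‖ā‖_X − μ_{m+1}), and W̄_∞ = (W_∞ − h)/(2‖ā‖_X − μ_{m+1}). Then sup_{0≤s≤t≤h} ∫_s^t ∫_s^τ W^∞(τ,σ) dσ dτ ≤ W̄_∞. -/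
/-!
Put `c = 2‖ā‖_X - μ`. The exponent `-μ (τ - σ) + 2 ∫_σ^τ ‖ā‖` is the integral over `[σ, τ]` of
`2‖ā‖ - μ ≤ c`, so the integrand is at most `exp (c (τ - σ))`. Integrating twice gives
`(exp (c (t - s)) - c (t - s) - 1) / c²`, and `x ↦ exp (c x) - c x` is nondecreasing on `x ≥ 0`,
so the worst case is `t - s = h`, where this is exactly `W̄_∞`.
-/

open Real MeasureTheory intervalIntegral Set
open scoped Interval

theorem integral_exp_const_mul {c : ℝ} (hc : c ≠ 0) (a b : ℝ) :
    ∫ x in a..b, exp (c * x) = (exp (c * b) - exp (c * a)) / c := by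
  rw [integral_comp_mul_left exp hc, integral_exp, smul_eq_mul]
  field_simp

theorem integral_exp_mul_sub {c : ℝ} (hc : c ≠ 0) (s τ : ℝ) :
    ∫ σ in s..τ, exp (c * (τ - σ)) = (exp (c * (τ - s)) - 1) / c := by
  rw [integral_comp_sub_left (fun x => exp (c * x)), integral_exp_const_mul hc, sub_self,
    mul_zero, exp_zero]

theorem integral_exp_mul_sub_sub_one_div {c : ℝ} (hc : c ≠ 0) (s t : ℝ) :
    ∫ τ in s..t, (exp (c * (τ - s)) - 1) / c = (exp (c * (t - s)) - c * (t - s) - 1) / c ^ 2 := by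
  have hint : IntervalIntegrable (fun τ => exp (c * (τ - s))) volume s t := by
    apply Continuous.intervalIntegrable; fun_prop
  rw [intervalIntegral.integral_div, integral_sub hint intervalIntegrable_const,
    integral_comp_sub_right (fun x => exp (c * x)), integral_exp_const_mul hc,
    intervalIntegral.integral_const, sub_self, mul_zero, exp_zero, smul_eq_mul, mul_one]
  field_simp
  ring

theorem exp_mul_sub_mul_le_of_le {c x y : ℝ} (hx : 0 ≤ x) (hxy : x ≤ y) :
    exp (c * x) - c * x ≤ exp (c * y) - c * y := by
  have hsplit : exp (c * y) = exp (c * x) * exp (c * (y - x)) := by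
    rw [← exp_add]; ring_nf
  have htangent : c * (y - x) + 1 ≤ exp (c * (y - x)) := add_one_le_exp _
  -- `exp (c x) - 1` has the sign of `c` because `x ≥ 0`
  have hsign : 0 ≤ (exp (c * x) - 1) * (c * (y - x)) := by
    rcases le_or_gt c 0 with hc | hc
    · have : exp (c * x) ≤ 1 := exp_le_one_iff.mpr (mul_nonpos_of_nonpos_of_nonneg hc hx)
      exact mul_nonneg_of_nonpos_of_nonpos (by linarith)
        (mul_nonpos_of_nonpos_of_nonneg hc (by linarith))
    · have : 1 ≤ exp (c * x) := one_le_exp (mul_nonneg hc.le hx)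
      exact mul_nonneg (by linarith) (mul_nonneg hc.le (by linarith))
  nlinarith [exp_pos (c * x)]

section
variable {f : ℝ → ℝ} {s t : ℝ}

theorem continuousOn_integral_exp_integral (hf : IntervalIntegrable f volume s t) :
    ContinuousOn (fun τ => ∫ σ in s..τ, exp (∫ r in σ..τ, f r)) [[s, t]] := by
  set P : ℝ → ℝ := fun x => ∫ r in s..x, f r
  have hP : ContinuousOn P [[s, t]] := continuousOn_primitive_interval' hf left_mem_uIcc
  -- separating the variables leaves a continuous factor times a primitive
  have hfactor : ∀ τ ∈ [[s, t]],
      ∫ σ in s..τ, exp (∫ r in σ..τ, f r) = exp (P τ) * ∫ σ in s..τ, exp (-P σ) := by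
    intro τ hτ
    have hsub : [[s, τ]] ⊆ [[s, t]] := uIcc_subset_uIcc_left hτ
    rw [← intervalIntegral.integral_const_mul]
    refine integral_congr fun σ hσ => ?_
    rw [← integral_interval_sub_left (hf.mono_set hsub)
      (hf.mono_set (uIcc_subset_uIcc_left (hsub hσ))), ← exp_add, sub_eq_add_neg]
  have hexpP : ContinuousOn (fun σ => exp (-P σ)) [[s, t]] := hP.neg.rexp
  exact (hP.rexp.mul (continuousOn_primitive_interval' hexpP.intervalIntegrable
    left_mem_uIcc)).congr hfactor

theorem integral_exp_integral_le {c : ℝ} (hc : c ≠ 0) (hf : IntervalIntegrable f volume s t)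
    (hfc : ∀ r ∈ Icc s t, f r ≤ c) {τ : ℝ} (hτ : τ ∈ Icc s t) :
    ∫ σ in s..τ, exp (∫ r in σ..τ, f r) ≤ (exp (c * (τ - s)) - 1) / c := by
  have hfτ : IntervalIntegrable f volume s τ :=
    hf.mono_set (uIcc_subset_uIcc_left (Icc_subset_uIcc hτ))
  have hcont : ContinuousOn (fun σ => ∫ r in σ..τ, f r) [[s, τ]] := by
    refine (continuousOn_primitive_interval' hfτ right_mem_uIcc).neg.congr fun σ _ => ?_
    simp only [Pi.neg_apply, integral_symm σ τ, neg_neg]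
  have hkernel : ∀ σ ∈ Icc s τ, exp (∫ r in σ..τ, f r) ≤ exp (c * (τ - σ)) := by
    intro σ hσ
    have hint : ∫ r in σ..τ, f r ≤ ∫ _ in σ..τ, c :=
      integral_mono_on hσ.2 (hfτ.mono_set (uIcc_subset_uIcc_right (Icc_subset_uIcc hσ)))
        intervalIntegrable_const fun r hr => hfc r ⟨hσ.1.trans hr.1, hr.2.trans hτ.2⟩
    rw [intervalIntegral.integral_const, smul_eq_mul] at hint
    exact exp_le_exp.mpr (by linarith)
  calc ∫ σ in s..τ, exp (∫ r in σ..τ, f r)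
      ≤ ∫ σ in s..τ, exp (c * (τ - σ)) :=
        integral_mono_on hτ.1 hcont.rexp.intervalIntegrable
          (by apply Continuous.intervalIntegrable; fun_prop) hkernel
    _ = (exp (c * (τ - s)) - 1) / c := integral_exp_mul_sub hc s τ

theorem integral_integral_exp_integral_le {c : ℝ} (hc : c ≠ 0) (hst : s ≤ t)
    (hf : IntervalIntegrable f volume s t) (hfc : ∀ r ∈ Icc s t, f r ≤ c) :
    ∫ τ in s..t, ∫ σ in s..τ, exp (∫ r in σ..τ, f r)
      ≤ (exp (c * (t - s)) - c * (t - s) - 1) / c ^ 2 :=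
  calc ∫ τ in s..t, ∫ σ in s..τ, exp (∫ r in σ..τ, f r)
      ≤ ∫ τ in s..t, (exp (c * (τ - s)) - 1) / c :=
        integral_mono_on hst (continuousOn_integral_exp_integral hf).intervalIntegrable
          (by apply Continuous.intervalIntegrable; fun_prop)
          fun τ hτ => integral_exp_integral_le hc hf hfc hτ
    _ = (exp (c * (t - s)) - c * (t - s) - 1) / c ^ 2 := integral_exp_mul_sub_sub_one_div hc s t

end

theorem Winfty_double_integral_bound_general
    (h : ℝ)
    (a : ℝ → lp (fun _ : ℤ => ℂ) 1) (ha : ContinuousOn a (Set.Icc 0 h))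
    (μ nX Winf Wbar : ℝ)
    (hnX : nX = sSup ((fun t => ‖a t‖) '' Set.Icc 0 h))
    (hne : 2 * nX ≠ μ)
    (hWinf : Winf = (Real.exp ((2 * nX - μ) * h) - 1) / (2 * nX - μ))
    (hWbar : Wbar = (Winf - h) / (2 * nX - μ)) :
    ∀ s t : ℝ, 0 ≤ s → s ≤ t → t ≤ h →
      (∫ τ in s..t, ∫ σ in s..τ, Real.exp (-μ * (τ - σ) + 2 * ∫ r in σ..τ, ‖a r‖)) ≤ Wbar := by
  intro s t hs hst hth
  set c := 2 * nX - μ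
  have hc : c ≠ 0 := sub_ne_zero.mpr hne
  have hnormI : IntervalIntegrable (fun r => ‖a r‖) volume s t :=
    (ha.norm.mono (Icc_subset_Icc hs hth)).intervalIntegrable_of_Icc hst
  have hexponent : ∀ σ ∈ [[s, t]], ∀ τ ∈ [[s, t]],
      -μ * (τ - σ) + 2 * ∫ r in σ..τ, ‖a r‖ = ∫ r in σ..τ, (2 * ‖a r‖ - μ) := by
    intro σ hσ τ hτ
    rw [integral_sub ((hnormI.mono_set (uIcc_subset_uIcc hσ hτ)).const_mul 2)
      intervalIntegrable_const, intervalIntegral.integral_const_mul,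
      intervalIntegral.integral_const, smul_eq_mul]
    ring
  have hbound : ∀ r ∈ Icc s t, 2 * ‖a r‖ - μ ≤ c := fun r hr => by
    have := ha.norm.le_sSup_image_Icc ⟨hs.trans hr.1, hr.2.trans hth⟩
    rw [← hnX] at this
    linarith
  have hWbar' : Wbar = (exp (c * h) - c * h - 1) / c ^ 2 := by
    rw [hWbar, hWinf]
    field_simp
    ring
  calc (∫ τ in s..t, ∫ σ in s..τ, exp (-μ * (τ - σ) + 2 * ∫ r in σ..τ, ‖a r‖))
      = ∫ τ in s..t, ∫ σ in s..τ, exp (∫ r in σ..τ, (2 * ‖a r‖ - μ)) :=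
        integral_congr fun τ hτ => integral_congr fun σ hσ => by
          rw [hexponent σ (uIcc_subset_uIcc_left hτ hσ) τ hτ]
    _ ≤ (exp (c * (t - s)) - c * (t - s) - 1) / c ^ 2 :=
        integral_integral_exp_integral_le hc hst
          ((hnormI.const_mul 2).sub intervalIntegrable_const) hbound
    _ ≤ Wbar := by
        rw [hWbar']
        have := exp_mul_sub_mul_le_of_le (c := c) (sub_nonneg.mpr hst) (by linarith : t - s ≤ h)
        gcongr ?_ / _
        linarith

/-- Bound on the double integral of `W^∞` over the simplex `0 ≤ s ≤ t ≤ h`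
(inequality (3.14) of Lemma 3.2 of the paper). -/
theorem Winfty_double_integral_bound
    (h θ : ℝ) (hh : 0 < h) (hθ : θ ∈ Set.Ioo (-(π / 2)) (π / 2)) (m : ℕ)
    (a : ℝ → lp (fun _ : ℤ => ℂ) 1) (ha : ContinuousOn a (Set.Icc 0 h))
    (μ nX Winf Wbar : ℝ)
    (hμ : μ = ((m : ℝ) + 1) ^ 2 * (2 * π) ^ 2 * Real.cos θ)
    (hnX : nX = sSup ((fun t => ‖a t‖) '' Set.Icc 0 h))
    (hne : 2 * nX ≠ μ)
    (hWinf : Winf = (Real.exp ((2 * nX - μ) * h) - 1) / (2 * nX - μ))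
    (hWbar : Wbar = (Winf - h) / (2 * nX - μ)) :
    ∀ s t : ℝ, 0 ≤ s → s ≤ t → t ≤ h →
      (∫ τ in s..t, ∫ σ in s..τ, Real.exp (-μ * (τ - σ) + 2 * ∫ r in σ..τ, ‖a r‖)) ≤ Wbar :=
  Winfty_double_integral_bound_general h a ha μ nX Winf Wbar hnX hne hWinf hWbar
end

section
/- Let m be a nonnegative integer and ν ≥ 1. For a, b ∈ 𝒳^m_ν, the truncated Chebyshev–Fourier convolution a*b, defined for (ℓ,k) ∈ I by (a*b)_{ℓ,k} = Σ_{ℓ₁+ℓ₂=ℓ, k₁+k₂=k, (ℓ₁,k₁),(ℓ₂,k₂)∈ℤ²} ã_{ℓ₁,k₁} b̃_{ℓ₂,k₂}, belongs to 𝒳^m_ν and satisfies ‖a*b‖_{𝒳^m_ν} ≤ 4 ‖a‖_{𝒳^m_ν} ‖b‖_{𝒳^m_ν}. -/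
open scoped BigOperators

/-- The symmetric (Chebyshev) extension of a family indexed by `ℕ × ℤ` to `ℤ × ℤ`. -/
noncomputable def chebExt (c : ℕ → ℤ → ℂ) : ℤ → ℤ → ℂ := fun ℓ k => c ℓ.natAbs k

/-- The Chebyshev–Fourier convolution of two families. -/
noncomputable def chebConv (a b : ℕ → ℤ → ℂ) : ℕ → ℤ → ℂ := fun ℓ k =>
  ∑' p : ℤ × ℤ, chebExt a p.1 p.2 * chebExt b ((ℓ : ℤ) - p.1) (k - p.2)

/-- Summability and bound for the symmetric extension. -/
lemma chebExt_summable_and_le (ν : ℝ) (hν0 : 0 ≤ ν) (c : ℕ → ℤ → ℂ)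
    (hc : Summable fun p : ℕ × ℤ => ‖c p.1 p.2‖ * ν ^ p.1) :
    Summable (fun p : ℤ × ℤ => ‖c p.1.natAbs p.2‖ * ν ^ p.1.natAbs) ∧
    ∑' p : ℤ × ℤ, ‖c p.1.natAbs p.2‖ * ν ^ p.1.natAbs ≤
      2 * ∑' p : ℕ × ℤ, ‖c p.1 p.2‖ * ν ^ p.1 := by
  set g : ℕ × ℤ → ℝ := fun p => ‖c p.1 p.2‖ * ν ^ p.1 with hg
  have hgnn : ∀ p, 0 ≤ g p := fun p => by positivity
  set F : ℤ × ℤ → ℝ := fun p => ‖c p.1.natAbs p.2‖ * ν ^ p.1.natAbs with hF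
  set s : Set (ℤ × ℤ) := {p | 0 ≤ p.1} with hs
  set i : s → ℕ × ℤ := fun p => (p.1.1.toNat, p.1.2) with hi
  have hiinj : Function.Injective i := by
    rintro ⟨⟨x1, x2⟩, hx⟩ ⟨⟨y1, y2⟩, hy⟩ h
    simp only [hi, Prod.mk.injEq] at h
    simp only [hs, Set.mem_setOf_eq] at hx hy
    have : x1 = y1 := by omega
    simp [this, h.2]
  have hFi : (fun p : s => F p) = g ∘ i := by
    funext p
    have : p.1.1.natAbs = p.1.1.toNat := by
      have := p.2
      simp only [hs, Set.mem_setOf_eq] at this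
      omega
    simp [hF, hg, hi, this]
  have hSs : Summable (fun p : s => F p) := by
    rw [hFi]; exact hc.comp_injective hiinj
  set j : ↑sᶜ → ℕ × ℤ := fun p => (p.1.1.natAbs, p.1.2) with hj
  have hjinj : Function.Injective j := by
    rintro ⟨⟨x1, x2⟩, hx⟩ ⟨⟨y1, y2⟩, hy⟩ h
    simp only [hj, Prod.mk.injEq] at h
    simp only [hs, Set.mem_compl_iff, Set.mem_setOf_eq, not_le] at hx hy
    have : x1 = y1 := by omega
    simp [this, h.2]
  have hFj : (fun p : ↑sᶜ => F p) = g ∘ j := rfl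
  have hSc : Summable (fun p : ↑sᶜ => F p) := by
    rw [hFj]; exact hc.comp_injective hjinj
  have hSF : Summable F := summable_subtype_and_compl.mp ⟨hSs, hSc⟩
  refine ⟨hSF, ?_⟩
  have hsplit := Summable.tsum_subtype_add_tsum_subtype_compl hSF s
  have h1 : ∑' p : s, F p ≤ ∑' p : ℕ × ℤ, g p := by
    rw [hFi]
    exact Summable.tsum_le_tsum_of_inj i hiinj (fun p _ => hgnn p) (fun p => le_rfl)
      (hc.comp_injective hiinj) hc
  have h2 : ∑' p : ↑sᶜ, F p ≤ ∑' p : ℕ × ℤ, g p := by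
    rw [hFj]
    exact Summable.tsum_le_tsum_of_inj j hjinj (fun p _ => hgnn p) (fun p => le_rfl)
      (hc.comp_injective hjinj) hc
  calc ∑' p : ℤ × ℤ, F p = (∑' p : s, F p) + ∑' p : ↑sᶜ, F p := hsplit.symm
    _ ≤ (∑' p : ℕ × ℤ, g p) + ∑' p : ℕ × ℤ, g p := add_le_add h1 h2
    _ = 2 * ∑' p : ℕ × ℤ, g p := by ring

/-- Banach algebra estimate for the Chebyshev–Fourier convolution on `𝒳^m_ν`
(Lemma 3.7 of the paper): `‖a*b‖_{𝒳^m_ν} ≤ 4 ‖a‖_{𝒳^m_ν} ‖b‖_{𝒳^m_ν}`. -/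
theorem chebConv_mem_and_norm_le
    (m : ℕ) (ν : ℝ) (hν : 1 ≤ ν) (a b : ℕ → ℤ → ℂ)
    (ha0 : ∀ (ℓ : ℕ) (k : ℤ), m < k.natAbs → a ℓ k = 0)
    (hb0 : ∀ (ℓ : ℕ) (k : ℤ), m < k.natAbs → b ℓ k = 0)
    (ha : Summable fun p : ℕ × ℤ => ‖a p.1 p.2‖ * ν ^ p.1)
    (hb : Summable fun p : ℕ × ℤ => ‖b p.1 p.2‖ * ν ^ p.1) :
    Summable (fun p : {q : ℕ × ℤ // q.2.natAbs ≤ m} =>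
      ‖chebConv a b p.1.1 p.1.2‖ * ν ^ p.1.1) ∧
    ∑' p : {q : ℕ × ℤ // q.2.natAbs ≤ m}, ‖chebConv a b p.1.1 p.1.2‖ * ν ^ p.1.1 ≤
      4 * (∑' p : ℕ × ℤ, ‖a p.1 p.2‖ * ν ^ p.1) * (∑' p : ℕ × ℤ, ‖b p.1 p.2‖ * ν ^ p.1) := by
  have hν0 : (0:ℝ) ≤ ν := le_trans zero_le_one hν
  obtain ⟨hF, hFle⟩ := chebExt_summable_and_le ν hν0 a ha
  obtain ⟨hG, hGle⟩ := chebExt_summable_and_le ν hν0 b hb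
  set F : ℤ × ℤ → ℝ := fun p => ‖a p.1.natAbs p.2‖ * ν ^ p.1.natAbs with hFdef
  set G : ℤ × ℤ → ℝ := fun p => ‖b p.1.natAbs p.2‖ * ν ^ p.1.natAbs with hGdef
  have hFnn : ∀ p, 0 ≤ F p := fun p => by positivity
  have hGnn : ∀ p, 0 ≤ G p := fun p => by positivity
  -- full product summability
  have hFG : Summable (fun z : (ℤ × ℤ) × (ℤ × ℤ) => F z.1 * G z.2) :=
    hF.mul_of_nonneg hG hFnn hGnn
  -- change of variables
  set τ : (ℤ × ℤ) × (ℤ × ℤ) ≃ (ℤ × ℤ) × (ℤ × ℤ) :=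
    { toFun := fun z => (z.2, z.1 - z.2)
      invFun := fun z => (z.1 + z.2, z.1)
      left_inv := by intro z; simp
      right_inv := by intro z; simp } with hτ
  have hK : Summable (fun z : (ℤ × ℤ) × (ℤ × ℤ) => F z.2 * G (z.1 - z.2)) := by
    have := hFG.comp_injective τ.injective
    exact this
  -- fiberwise sums
  set H : ℤ × ℤ → ℝ := fun q => ∑' p : ℤ × ℤ, F p * G (q - p) with hHdef
  have hHhs : HasSum H (∑' z : (ℤ × ℤ) × (ℤ × ℤ), F z.2 * G (z.1 - z.2)) := by
    exact hK.hasSum.prod_fiberwise (fun q => (hK.prod_factor q).hasSum)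
  have hH : Summable H := hHhs.summable
  have hHnn : ∀ q, 0 ≤ H q := fun q =>
    tsum_nonneg (fun p => mul_nonneg (hFnn p) (hGnn _))
  have hHsum : ∑' q, H q = (∑' p, F p) * ∑' p, G p := by
    rw [hHhs.tsum_eq]
    have heq : (fun z : (ℤ × ℤ) × (ℤ × ℤ) => F z.2 * G (z.1 - z.2)) =
        fun z => F (τ z).1 * G (τ z).2 := by
      funext z; simp [hτ]
    rw [heq, τ.tsum_eq (fun z : (ℤ × ℤ) × (ℤ × ℤ) => F z.1 * G z.2),
      ← Summable.tsum_mul_tsum hF hG hFG]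
  -- pointwise key bound
  have key : ∀ (ℓ : ℕ) (k : ℤ), ‖chebConv a b ℓ k‖ * ν ^ ℓ ≤ H ((ℓ : ℤ), k) := by
    intro ℓ k
    have hterm : ∀ p : ℤ × ℤ,
        ‖chebExt a p.1 p.2 * chebExt b ((ℓ : ℤ) - p.1) (k - p.2)‖ * ν ^ ℓ ≤
          F p * G (((ℓ : ℤ), k) - p) := by
      intro p
      have hle : ℓ ≤ p.1.natAbs + ((ℓ : ℤ) - p.1).natAbs := by omega
      have hpow : ν ^ ℓ ≤ ν ^ (p.1.natAbs + ((ℓ : ℤ) - p.1).natAbs) :=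
        pow_le_pow_right₀ hν hle
      calc ‖chebExt a p.1 p.2 * chebExt b ((ℓ : ℤ) - p.1) (k - p.2)‖ * ν ^ ℓ
          = ‖a p.1.natAbs p.2‖ * ‖b ((ℓ : ℤ) - p.1).natAbs (k - p.2)‖ * ν ^ ℓ := by
            rw [norm_mul]; rfl
        _ ≤ ‖a p.1.natAbs p.2‖ * ‖b ((ℓ : ℤ) - p.1).natAbs (k - p.2)‖ *
              ν ^ (p.1.natAbs + ((ℓ : ℤ) - p.1).natAbs) := by
            apply mul_le_mul_of_nonneg_left hpow (by positivity)
        _ = F p * G (((ℓ : ℤ), k) - p) := by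
            simp only [hFdef, hGdef, Prod.fst_sub, Prod.snd_sub, pow_add]; ring
    have hnormsum : Summable (fun p : ℤ × ℤ =>
        ‖chebExt a p.1 p.2 * chebExt b ((ℓ : ℤ) - p.1) (k - p.2)‖) := by
      apply Summable.of_nonneg_of_le (fun p => norm_nonneg _)
        (fun p => ?_) (hK.prod_factor ((ℓ : ℤ), k))
      have h := hterm p
      have h1 : (1:ℝ) ≤ ν ^ ℓ := one_le_pow₀ hν
      nlinarith [norm_nonneg (chebExt a p.1 p.2 * chebExt b ((ℓ : ℤ) - p.1) (k - p.2))]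
    calc ‖chebConv a b ℓ k‖ * ν ^ ℓ
        ≤ (∑' p : ℤ × ℤ, ‖chebExt a p.1 p.2 * chebExt b ((ℓ : ℤ) - p.1) (k - p.2)‖) * ν ^ ℓ := by
          apply mul_le_mul_of_nonneg_right (norm_tsum_le_tsum_norm hnormsum) (by positivity)
      _ = ∑' p : ℤ × ℤ, ‖chebExt a p.1 p.2 * chebExt b ((ℓ : ℤ) - p.1) (k - p.2)‖ * ν ^ ℓ :=
          (tsum_mul_right).symm
      _ ≤ ∑' p : ℤ × ℤ, F p * G (((ℓ : ℤ), k) - p) := by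
          exact Summable.tsum_le_tsum hterm (hnormsum.mul_right _) (hK.prod_factor ((ℓ : ℤ), k))
      _ = H ((ℓ : ℤ), k) := rfl
  -- embed the subtype into ℤ × ℤ
  set e : {q : ℕ × ℤ // q.2.natAbs ≤ m} → ℤ × ℤ := fun q => ((q.1.1 : ℤ), q.1.2) with he
  have heinj : Function.Injective e := by
    rintro ⟨⟨x1, x2⟩, hx⟩ ⟨⟨y1, y2⟩, hy⟩ h
    simp only [he, Prod.mk.injEq] at h
    have : x1 = y1 := by exact_mod_cast h.1
    simp [this, h.2]
  have hHe : Summable (H ∘ e) := hH.comp_injective heinj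
  have hbound : ∀ q : {q : ℕ × ℤ // q.2.natAbs ≤ m},
      ‖chebConv a b q.1.1 q.1.2‖ * ν ^ q.1.1 ≤ H (e q) := fun q => key q.1.1 q.1.2
  have hSt : Summable (fun q : {q : ℕ × ℤ // q.2.natAbs ≤ m} =>
      ‖chebConv a b q.1.1 q.1.2‖ * ν ^ q.1.1) :=
    Summable.of_nonneg_of_le (fun q => by positivity) hbound hHe
  refine ⟨hSt, ?_⟩
  have hga : 0 ≤ ∑' p : ℕ × ℤ, ‖a p.1 p.2‖ * ν ^ p.1 :=
    tsum_nonneg (fun p => by positivity)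
  have hgb : 0 ≤ ∑' p : ℕ × ℤ, ‖b p.1 p.2‖ * ν ^ p.1 :=
    tsum_nonneg (fun p => by positivity)
  calc ∑' q : {q : ℕ × ℤ // q.2.natAbs ≤ m}, ‖chebConv a b q.1.1 q.1.2‖ * ν ^ q.1.1
      ≤ ∑' q : {q : ℕ × ℤ // q.2.natAbs ≤ m}, H (e q) := Summable.tsum_le_tsum hbound hSt hHe
    _ ≤ ∑' q : ℤ × ℤ, H q :=
        Summable.tsum_le_tsum_of_inj e heinj (fun q _ => hHnn q) (fun q => le_rfl) hHe hH
    _ = (∑' p, F p) * ∑' p, G p := hHsum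
    _ ≤ (2 * ∑' p : ℕ × ℤ, ‖a p.1 p.2‖ * ν ^ p.1) *
          (2 * ∑' p : ℕ × ℤ, ‖b p.1 p.2‖ * ν ^ p.1) := by
        apply mul_le_mul hFle hGle (tsum_nonneg (fun p => hGnn p)) (by linarith)
    _ = 4 * (∑' p : ℕ × ℤ, ‖a p.1 p.2‖ * ν ^ p.1) * (∑' p : ℕ × ℤ, ‖b p.1 p.2‖ * ν ^ p.1) := by
        ring
end

section
/- Let θ ∈ (−π/2, π/2) and φ₁, φ₂ ∈ ℂ with Re(e^{iθ}φ₁) ≤ 0 and Re(e^{iθ}φ₂) ≤ 0, and set Φ(t,φ) = φ/(1 − φ t e^{iθ}). Then for all t ≥ 0: |Φ(t,φ₁) − Φ(t,φ₂)| ≤ |φ₁ − φ₂| / (√(1 + |φ₁|² t²) · √(1 + |φ₂|² t²)) ≤ |φ₁ − φ₂|. -/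
open Real

/-- The explicit solution of the center ODE `dx/dt = e^{iθ} x²`, `x(0) = φ`. -/
noncomputable def PhiC (θ : ℝ) (t : ℝ) (φ : ℂ) : ℂ :=
  φ / (1 - φ * (t : ℂ) * Complex.exp (θ * Complex.I))

lemma denom_lower_bound (θ : ℝ) (φ : ℂ) (hφ : (Complex.exp (θ * Complex.I) * φ).re ≤ 0)
    (t : ℝ) (ht : 0 ≤ t) :
    Real.sqrt (1 + ‖φ‖ ^ 2 * t ^ 2) ≤
      ‖1 - φ * (t : ℂ) * Complex.exp (θ * Complex.I)‖ := by
  have he : Complex.normSq (Complex.exp (θ * Complex.I)) = 1 := by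
    rw [← Complex.sq_norm, Complex.norm_exp_ofReal_mul_I]; norm_num
  have hre : (φ * (t : ℂ) * Complex.exp (θ * Complex.I)).re
      = t * (Complex.exp (θ * Complex.I) * φ).re := by
    rw [show φ * (t : ℂ) * Complex.exp (θ * Complex.I)
        = (t : ℂ) * (Complex.exp (θ * Complex.I) * φ) by ring]
    simp [Complex.mul_re]
  have hns : Complex.normSq (φ * (t : ℂ) * Complex.exp (θ * Complex.I))
      = ‖φ‖ ^ 2 * t ^ 2 := by
    rw [Complex.normSq_mul, Complex.normSq_mul, he, ← Complex.sq_norm, Complex.normSq_ofReal]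
    ring
  set z := φ * (t : ℂ) * Complex.exp (θ * Complex.I) with hz
  have hexp : Complex.normSq (1 - z) = 1 - 2 * z.re + Complex.normSq z := by
    simp [Complex.normSq_apply, Complex.sub_re, Complex.sub_im]
    ring
  have habs : Real.sqrt (Complex.normSq φ) = ‖φ‖ := by rw [Complex.norm_def]
  rw [Complex.norm_def (1 - z)]
  apply Real.sqrt_le_sqrt
  rw [hexp, hns, hre]
  nlinarith [mul_nonneg ht (neg_nonneg.mpr hφ)]

/-- Contraction estimate for the center flow (inequality (6.9) of the paper):
`|Φ(t,φ₁) − Φ(t,φ₂)| ≤ |φ₁ − φ₂| / (√(1+|φ₁|²t²)√(1+|φ₂|²t²)) ≤ |φ₁ − φ₂|`. -/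
theorem PhiC_difference_bound
    (θ : ℝ) (hθ : θ ∈ Set.Ioo (-(π / 2)) (π / 2)) (φ₁ φ₂ : ℂ)
    (hφ₁ : (Complex.exp (θ * Complex.I) * φ₁).re ≤ 0)
    (hφ₂ : (Complex.exp (θ * Complex.I) * φ₂).re ≤ 0) :
    ∀ t : ℝ, 0 ≤ t →
      ‖PhiC θ t φ₁ - PhiC θ t φ₂‖ ≤
        ‖φ₁ - φ₂‖ /
          (Real.sqrt (1 + ‖φ₁‖ ^ 2 * t ^ 2) *
            Real.sqrt (1 + ‖φ₂‖ ^ 2 * t ^ 2)) ∧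
      ‖φ₁ - φ₂‖ /
          (Real.sqrt (1 + ‖φ₁‖ ^ 2 * t ^ 2) *
            Real.sqrt (1 + ‖φ₂‖ ^ 2 * t ^ 2)) ≤
        ‖φ₁ - φ₂‖ := by
  intro t ht
  have hs₁ : (1:ℝ) ≤ Real.sqrt (1 + ‖φ₁‖ ^ 2 * t ^ 2) := by
    have h := Real.sqrt_le_sqrt (show (1:ℝ) ≤ 1 + ‖φ₁‖ ^ 2 * t ^ 2 by
      nlinarith [sq_nonneg (‖φ₁‖ * t)])
    simpa using h
  have hs₂ : (1:ℝ) ≤ Real.sqrt (1 + ‖φ₂‖ ^ 2 * t ^ 2) := by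
    have h := Real.sqrt_le_sqrt (show (1:ℝ) ≤ 1 + ‖φ₂‖ ^ 2 * t ^ 2 by
      nlinarith [sq_nonneg (‖φ₂‖ * t)])
    simpa using h
  have hd₁ := denom_lower_bound θ φ₁ hφ₁ t ht
  have hd₂ := denom_lower_bound θ φ₂ hφ₂ t ht
  have hd₁' : (1 - φ₁ * (t : ℂ) * Complex.exp (θ * Complex.I)) ≠ 0 := by
    intro h
    rw [h] at hd₁; simp at hd₁; linarith
  have hd₂' : (1 - φ₂ * (t : ℂ) * Complex.exp (θ * Complex.I)) ≠ 0 := by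
    intro h
    rw [h] at hd₂; simp at hd₂; linarith
  have hfac : PhiC θ t φ₁ - PhiC θ t φ₂ =
      (φ₁ - φ₂) / ((1 - φ₁ * (t : ℂ) * Complex.exp (θ * Complex.I)) *
        (1 - φ₂ * (t : ℂ) * Complex.exp (θ * Complex.I))) := by
    unfold PhiC
    rw [div_sub_div _ _ hd₁' hd₂']
    congr 1; ring
  refine ⟨?_, ?_⟩
  · rw [hfac, norm_div, norm_mul]
    gcongr <;> first | exact norm_nonneg _ | linarith
  · apply div_le_self (norm_nonneg _)
    calc (1:ℝ) = 1 * 1 := by ring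
    _ ≤ _ := by gcongr <;> linarith
end

section
/- Fix r_c, r_s, ρ > 0 and define δ₁ = 2r_c + (1 + 2ρ) r_s. Suppose δ₁ < μ. Let α ∈ ℬ, φ ∈ B_c(r_c), ξ ∈ B_s(r_s), and let x : [0,∞) → X_s be a mild solution with data (φ, ξ, α). Then for all t ≥ 0: ‖x(t)‖_{ℓ¹} ≤ e^{−(μ − δ₁) t} ‖ξ‖_{ℓ¹}. -/
/-!
On every mode `k ≠ 0` the linear flow contracts by `e^{-μt}`, because `Re(e^{iθ}) k² ω² ≥ μ`.
Since `x(τ)` has no zero mode, the nonlinearity off the zero mode equals `e^{iθ}(2c x + x * x)`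
with `c = α(Φ(τ,φ), x(τ))`. The explicit center flow `Φ` keeps `φ` in `B_c`, so
`|c| ≤ r_c + ρ r_s`, and Young's inequality `‖x * x‖ ≤ ‖x‖²` bounds the forcing by `δ₁ ‖x(τ)‖`.
Summing the Duhamel formula over the modes gives
`‖x(t)‖ ≤ e^{-μt} ‖ξ‖ + δ₁ ∫₀ᵗ e^{-μ(t-τ)} ‖x(τ)‖ dτ`,
and Grönwall's inequality for `e^{μt} ‖x(t)‖` gives the claim.
-/

open Real MeasureTheory intervalIntegral Filter

/-- The space `ℓ¹` of bi-infinite absolutely summable complex sequences. -/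
noncomputable abbrev ell1 : Type := lp (fun _ : ℤ => ℂ) 1

/-- The element of `ℓ¹` obtained by combining a center component `xc` (at index `0`)
with a stable component `xs` (at indices `k ≠ 0`), as a plain function. -/
noncomputable def combine (xc : ℂ) (xs : ell1) : ℤ → ℂ := fun k =>
  if k = 0 then xc else xs k

/-- The stable part `𝒩_s(x_c,x_s)` of the nonlinearity `e^{iθ} a*a`. -/
noncomputable def Ns (θ : ℝ) (xc : ℂ) (xs : ell1) : ℤ → ℂ := fun k =>
  if k = 0 then 0 else
    Complex.exp (θ * Complex.I) * ∑' j : ℤ, combine xc xs (k - j) * combine xc xs j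

/-- The center ball `B_c(r_c) = {x ∈ ℂ : |x| ≤ r_c, Re(e^{iθ}x) ≤ 0}`. -/
def Bc (θ rc : ℝ) : Set ℂ :=
  {x : ℂ | ‖x‖ ≤ rc ∧ (Complex.exp (θ * Complex.I) * x).re ≤ 0}

/-- The stable ball `B_s(r_s) = {x ∈ X_s : ‖x‖ ≤ r_s}`, where `X_s = {a ∈ ℓ¹ : a₀ = 0}`. -/
def Bs (rs : ℝ) : Set ell1 := {x : ell1 | ‖x‖ ≤ rs ∧ x 0 = 0}

/-- Membership in the class `ℬ` of Lipschitz maps `α : B_c × B_s → ℂ` with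
`α(x_c,0) = x_c` and `|α(x_c,x₁) − α(x_c,x₂)| ≤ ρ ‖x₁ − x₂‖`. -/
def memB (θ ρ rc rs : ℝ) (α : ℂ → ell1 → ℂ) : Prop :=
  (∃ L : ℝ, ∀ xc ∈ Bc θ rc, ∀ yc ∈ Bc θ rc, ∀ xs ∈ Bs rs, ∀ ys ∈ Bs rs,
      ‖α xc xs - α yc ys‖ ≤ L * (‖xc - yc‖ + ‖xs - ys‖)) ∧
  (∀ xc ∈ Bc θ rc, α xc 0 = xc) ∧
  (∀ xc ∈ Bc θ rc, ∀ x₁ ∈ Bs rs, ∀ x₂ ∈ Bs rs,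
    ‖α xc x₁ - α xc x₂‖ ≤ ρ * ‖x₁ - x₂‖)

/-- `x : [0,∞) → X_s` is a mild solution of the projected stable equation
with data `(φ, ξ, α)`, staying in `B_s(r_s)`. -/
def MildSolution (θ rs : ℝ) (α : ℂ → ell1 → ℂ) (φ : ℂ) (ξ : ell1) (x : ℝ → ell1) :
    Prop :=
  ContinuousOn x (Set.Ici 0) ∧
  (∀ t : ℝ, 0 ≤ t → x t ∈ Bs rs) ∧
  (∀ k : ℤ, k ≠ 0 → ∀ t : ℝ, 0 ≤ t →
    x t k =
      Complex.exp (-(Complex.exp (θ * Complex.I)) * (k : ℂ) ^ 2 *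
          ((2 * π : ℝ) : ℂ) ^ 2 * (t : ℂ)) * ξ k +
      ∫ τ in (0:ℝ)..t,
        Complex.exp (-(Complex.exp (θ * Complex.I)) * (k : ℂ) ^ 2 *
            ((2 * π : ℝ) : ℂ) ^ 2 * ((t - τ : ℝ) : ℂ)) *
          Ns θ (α (PhiC θ τ φ) (x τ)) (x τ) k)

namespace ell1

lemma summable_norm (y : ell1) : Summable fun k => ‖y k‖ := by
  simpa using (lp.memℓp y).summable (p := 1) (by norm_num)

lemma norm_eq_tsum_norm (y : ell1) : ‖y‖ = ∑' k, ‖y k‖ := by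
  simpa using lp.norm_eq_tsum_rpow (p := 1) (by norm_num) y

lemma sum_norm_le_norm (y : ell1) (s : Finset ℤ) : ∑ k ∈ s, ‖y k‖ ≤ ‖y‖ := by
  simpa using lp.sum_rpow_le_norm_rpow (p := 1) (by norm_num) y s

lemma norm_le_of_forall_sum_le {y : ell1} {C : ℝ} (hC : 0 ≤ C)
    (h : ∀ s : Finset ℤ, ∑ k ∈ s, ‖y k‖ ≤ C) : ‖y‖ ≤ C :=
  lp.norm_le_of_forall_sum_le (by norm_num) hC (by simpa using h)

lemma summable_norm_mul_norm_sub (y z : ell1) (k : ℤ) :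
    Summable fun j => ‖y (k - j)‖ * ‖z j‖ :=
  .of_nonneg_of_le (fun j => by positivity)
    (fun j => mul_le_mul_of_nonneg_right (lp.norm_apply_le_norm one_ne_zero y _) (norm_nonneg _))
    ((summable_norm z).mul_left ‖y‖)

lemma summable_mul_sub (y z : ell1) (k : ℤ) : Summable fun j => y (k - j) * z j :=
  .of_norm (by simpa only [norm_mul] using summable_norm_mul_norm_sub y z k)

lemma sum_norm_tsum_mul_sub_le (y z : ell1) (s : Finset ℤ) :
    ∑ k ∈ s, ‖∑' j, y (k - j) * z j‖ ≤ ‖y‖ * ‖z‖ := by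
  have hshift (j : ℤ) : ∑ k ∈ s, ‖y (k - j)‖ ≤ ‖y‖ := by
    simpa [Finset.sum_map] using sum_norm_le_norm y (s.map (Equiv.subRight j).toEmbedding)
  calc ∑ k ∈ s, ‖∑' j, y (k - j) * z j‖
      ≤ ∑ k ∈ s, ∑' j, ‖y (k - j)‖ * ‖z j‖ := by
        gcongr with k
        simpa only [norm_mul] using norm_tsum_le_tsum_norm (summable_mul_sub y z k).norm
    _ = ∑' j, ∑ k ∈ s, ‖y (k - j)‖ * ‖z j‖ :=
        (Summable.tsum_finsetSum fun k _ => summable_norm_mul_norm_sub y z k).symm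
    _ ≤ ∑' j, ‖y‖ * ‖z j‖ := by
        refine Summable.tsum_le_tsum (fun j => ?_)
          (summable_sum fun k _ => summable_norm_mul_norm_sub y z k) ((summable_norm z).mul_left _)
        rw [← Finset.sum_mul]
        exact mul_le_mul_of_nonneg_right (hshift j) (norm_nonneg _)
    _ = ‖y‖ * ‖z‖ := by rw [tsum_mul_left, norm_eq_tsum_norm z]

lemma memℓp_tsum_mul_sub (y z : ell1) : Memℓp (fun k => ∑' j, y (k - j) * z j) 1 := by
  refine memℓp_gen (summable_of_sum_le (fun k => by positivity) (c := ‖y‖ * ‖z‖) fun s => ?_)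
  simpa using sum_norm_tsum_mul_sub_le y z s

noncomputable def convolution : ell1 →L[ℂ] ell1 →L[ℂ] ell1 :=
  LinearMap.mkContinuous₂
    (LinearMap.mk₂ ℂ (fun y z => ⟨_, memℓp_tsum_mul_sub y z⟩)
      (fun y₁ y₂ z => by
        ext k
        simp only [lp.coeFn_add, Pi.add_apply, add_mul]
        exact (summable_mul_sub y₁ z k).tsum_add (summable_mul_sub y₂ z k))
      (fun c y z => by
        ext k
        simp only [lp.coeFn_smul, Pi.smul_apply, smul_eq_mul, mul_assoc]
        exact tsum_mul_left)
      (fun y z₁ z₂ => by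
        ext k
        simp only [lp.coeFn_add, Pi.add_apply, mul_add]
        exact (summable_mul_sub y z₁ k).tsum_add (summable_mul_sub y z₂ k))
      (fun c y z => by
        ext k
        simp only [lp.coeFn_smul, Pi.smul_apply, smul_eq_mul, mul_left_comm _ c]
        exact tsum_mul_left))
    1 fun y z => by
      rw [one_mul]
      exact norm_le_of_forall_sum_le (by positivity) (sum_norm_tsum_mul_sub_le y z)

lemma convolution_apply (y z : ell1) (k : ℤ) : convolution y z k = ∑' j, y (k - j) * z j := rfl

lemma norm_convolution_le (y z : ell1) : ‖convolution y z‖ ≤ ‖y‖ * ‖z‖ :=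
  norm_le_of_forall_sum_le (by positivity) (sum_norm_tsum_mul_sub_le y z)

lemma convolution_single_zero_left (c : ℂ) (z : ell1) :
    convolution (lp.single 1 0 c) z = c • z := by
  ext k
  rw [convolution_apply, tsum_eq_single k fun j hj => by
    rw [lp.single_apply_ne _ _ _ (sub_ne_zero.2 hj.symm), zero_mul]]
  simp

lemma convolution_single_zero_right (c : ℂ) (y : ell1) :
    convolution y (lp.single 1 0 c) = c • y := by
  ext k
  rw [convolution_apply, tsum_eq_single 0 fun j hj => by rw [lp.single_apply_ne _ _ _ hj, mul_zero]]
  simp [mul_comm]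

end ell1

/-- Off the zero mode, `(c δ₀ + y) * (c δ₀ + y) = c² δ₀ + 2c y + y * y` reduces to this. -/
noncomputable def stableQuadratic (c : ℂ) (y : ell1) : ell1 :=
  (2 * c) • y + ell1.convolution y y

lemma combine_eq_single_add {y : ell1} (hy : y 0 = 0) (c : ℂ) :
    combine c y = ⇑(lp.single 1 0 c + y : ell1) := by
  ext k
  rcases eq_or_ne k 0 with rfl | hk
  · simp [combine, hy]
  · simp [combine, hk]

lemma Ns_apply_of_ne_zero (θ : ℝ) (c : ℂ) {y : ell1} (hy : y 0 = 0) {k : ℤ} (hk : k ≠ 0) :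
    Ns θ c y k = Complex.exp (θ * Complex.I) * stableQuadratic c y k := by
  have hconv : ell1.convolution (lp.single 1 0 c + y) (lp.single 1 0 c + y) =
      c • lp.single 1 0 c + stableQuadratic c y := by
    simp only [map_add, add_apply, ell1.convolution_single_zero_left,
      ell1.convolution_single_zero_right, stableQuadratic]
    module
  have := congrArg (· k) hconv
  simp only [lp.coeFn_add, lp.coeFn_smul, Pi.add_apply, Pi.smul_apply,
    lp.single_apply_ne _ _ _ hk, smul_zero, zero_add] at this
  rw [Ns, if_neg hk, combine_eq_single_add hy, ← ell1.convolution_apply, this]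

lemma norm_Ns_le (θ : ℝ) (c : ℂ) {y : ell1} (hy : y 0 = 0) (k : ℤ) :
    ‖Ns θ c y k‖ ≤ ‖stableQuadratic c y k‖ := by
  rcases eq_or_ne k 0 with rfl | hk
  · simp [Ns]
  · rw [Ns_apply_of_ne_zero θ c hy hk, norm_mul, Complex.norm_exp_ofReal_mul_I, one_mul]

lemma norm_stableQuadratic_le (c : ℂ) (y : ell1) :
    ‖stableQuadratic c y‖ ≤ (2 * ‖c‖ + ‖y‖) * ‖y‖ := by
  calc ‖stableQuadratic c y‖ ≤ ‖(2 * c) • y‖ + ‖ell1.convolution y y‖ := norm_add_le _ _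
    _ ≤ 2 * ‖c‖ * ‖y‖ + ‖y‖ * ‖y‖ := by
        gcongr
        · simp [norm_smul]
        · exact ell1.norm_convolution_le y y
    _ = (2 * ‖c‖ + ‖y‖) * ‖y‖ := by ring

lemma continuousOn_stableQuadratic {s : Set ℝ} {c : ℝ → ℂ} {y : ℝ → ell1}
    (hc : ContinuousOn c s) (hy : ContinuousOn y s) :
    ContinuousOn (fun τ => stableQuadratic (c τ) (y τ)) s := by
  unfold stableQuadratic
  fun_prop

lemma continuousOn_uncurry_of_norm_sub_le {E F G : Type*} [SeminormedAddCommGroup E]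
    [SeminormedAddCommGroup F] [SeminormedAddCommGroup G] {f : E → F → G} {s : Set E}
    {t : Set F} {L : ℝ}
    (h : ∀ a ∈ s, ∀ a' ∈ s, ∀ b ∈ t, ∀ b' ∈ t, ‖f a b - f a' b'‖ ≤ L * (‖a - a'‖ + ‖b - b'‖)) :
    ContinuousOn (Function.uncurry f) (s ×ˢ t) := by
  refine (LipschitzOnWith.of_dist_le_mul (K := ‖2 * L‖₊) fun p hp q hq => ?_).continuousOn
  have hsum : ‖p.1 - q.1‖ + ‖p.2 - q.2‖ ≤ 2 * dist p q := by
    rw [← dist_eq_norm, ← dist_eq_norm, two_mul, Prod.dist_eq]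
    exact add_le_add (le_max_left _ _) (le_max_right _ _)
  calc dist (f p.1 p.2) (f q.1 q.2) ≤ L * (‖p.1 - q.1‖ + ‖p.2 - q.2‖) := by
        rw [dist_eq_norm]; exact h _ hp.1 _ hq.1 _ hp.2 _ hq.2
    _ ≤ |L| * (2 * dist p q) :=
        mul_le_mul (le_abs_self L) hsum (by positivity) (abs_nonneg L)
    _ = ‖2 * L‖₊ * dist p q := by
        rw [coe_nnnorm, Real.norm_eq_abs, abs_mul, abs_two]; ring

lemma zero_mem_Bs {rs : ℝ} (hrs : 0 ≤ rs) : (0 : ell1) ∈ Bs rs := ⟨by simpa using hrs, rfl⟩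

lemma norm_le_of_memB {θ ρ rc rs : ℝ} {α : ℂ → ell1 → ℂ} (hα : memB θ ρ rc rs α)
    (hrs : 0 ≤ rs) {c : ℂ} (hc : c ∈ Bc θ rc) {y : ell1} (hy : y ∈ Bs rs) :
    ‖α c y‖ ≤ ‖c‖ + ρ * ‖y‖ := by
  have hlip := hα.2.2 c hc y hy 0 (zero_mem_Bs hrs)
  rw [hα.2.1 c hc, sub_zero] at hlip
  simpa using norm_le_norm_add_norm_sub' (α c y) c |>.trans (add_le_add_right hlip _)

lemma one_le_norm_one_sub_mul {w : ℂ} (hw : w.re ≤ 0) {t : ℝ} (ht : 0 ≤ t) :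
    1 ≤ ‖1 - t * w‖ := by
  refine le_trans ?_ (Complex.re_le_norm _)
  simp only [Complex.sub_re, Complex.one_re, Complex.re_ofReal_mul]
  nlinarith

lemma PhiC_eq (θ t : ℝ) (φ : ℂ) :
    PhiC θ t φ = φ / (1 - t * (Complex.exp (θ * Complex.I) * φ)) := by
  rw [PhiC]; ring_nf

lemma PhiC_mem_Bc {θ rc : ℝ} {φ : ℂ} (hφ : φ ∈ Bc θ rc) {t : ℝ} (ht : 0 ≤ t) :
    PhiC θ t φ ∈ Bc θ rc := by
  set w := Complex.exp (θ * Complex.I) * φ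
  have hden := one_le_norm_one_sub_mul hφ.2 ht
  refine ⟨?_, ?_⟩
  · rw [PhiC_eq, norm_div]
    exact (div_le_self (norm_nonneg _) hden).trans hφ.1
  · have hre : (1 - t * w).re = 1 - t * w.re := by simp
    have him : (1 - t * w).im = -(t * w.im) := by simp
    -- the numerator is `Re (w * conj (1 - t w)) = Re w - t |w|²`
    rw [PhiC_eq, mul_div_assoc', Complex.div_re, hre, him, ← add_div]
    exact div_nonpos_of_nonpos_of_nonneg
      (by nlinarith [hφ.2, mul_nonneg ht (mul_self_nonneg w.re),
        mul_nonneg ht (mul_self_nonneg w.im)])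
      (Complex.normSq_nonneg _)

lemma continuousOn_PhiC {θ rc : ℝ} {φ : ℂ} (hφ : φ ∈ Bc θ rc) :
    ContinuousOn (fun t => PhiC θ t φ) (Set.Ici 0) := by
  simp_rw [PhiC_eq]
  refine continuousOn_const.div (by fun_prop) fun t ht => ?_
  exact norm_pos_iff.1 (one_pos.trans_le (one_le_norm_one_sub_mul hφ.2 ht))

lemma norm_stableQuadratic_le_of_memB {θ ρ rc rs : ℝ} {α : ℂ → ell1 → ℂ}
    (hα : memB θ ρ rc rs α) (hρ : 0 ≤ ρ) (hrs : 0 ≤ rs) {c : ℂ} (hc : c ∈ Bc θ rc) {y : ell1}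
    (hy : y ∈ Bs rs) :
    ‖stableQuadratic (α c y) y‖ ≤ (2 * rc + (1 + 2 * ρ) * rs) * ‖y‖ := by
  have hαc := norm_le_of_memB hα hrs hc hy
  refine (norm_stableQuadratic_le _ _).trans (mul_le_mul_of_nonneg_right ?_ (norm_nonneg _))
  nlinarith [hc.1, hy.1, mul_le_mul_of_nonneg_left hy.1 hρ]

lemma continuousOn_comp_of_memB {θ ρ rc rs : ℝ} {α : ℂ → ell1 → ℂ} (hα : memB θ ρ rc rs α)
    {s : Set ℝ} {c : ℝ → ℂ} {y : ℝ → ell1} (hc : ContinuousOn c s) (hy : ContinuousOn y s)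
    (hcB : Set.MapsTo c s (Bc θ rc)) (hyB : Set.MapsTo y s (Bs rs)) :
    ContinuousOn (fun τ => α (c τ) (y τ)) s := by
  obtain ⟨L, hL⟩ := hα.1
  exact (continuousOn_uncurry_of_norm_sub_le hL).comp (hc.prodMk hy) fun τ hτ => ⟨hcB hτ, hyB hτ⟩

noncomputable def heatSymbol (θ : ℝ) (k : ℤ) (s : ℝ) : ℂ :=
  Complex.exp (-(Complex.exp (θ * Complex.I)) * (k : ℂ) ^ 2 * ((2 * π : ℝ) : ℂ) ^ 2 * (s : ℂ))

lemma norm_heatSymbol_le {θ μ : ℝ} (hcos : 0 ≤ Real.cos θ) (hμ : μ ≤ (2 * π) ^ 2 * Real.cos θ)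
    {k : ℤ} (hk : k ≠ 0) {s : ℝ} (hs : 0 ≤ s) :
    ‖heatSymbol θ k s‖ ≤ Real.exp (-μ * s) := by
  have hre : (-(Complex.exp (θ * Complex.I)) * (k : ℂ) ^ 2 * ((2 * π : ℝ) : ℂ) ^ 2 * (s : ℂ)).re =
      -((2 * π) ^ 2 * Real.cos θ * (k : ℝ) ^ 2 * s) := by
    rw [show -(Complex.exp (θ * Complex.I)) * (k : ℂ) ^ 2 * ((2 * π : ℝ) : ℂ) ^ 2 * (s : ℂ) =
      (-((2 * π) ^ 2 * (k : ℝ) ^ 2 * s) : ℝ) * Complex.exp (θ * Complex.I) by push_cast; ring,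
      Complex.re_ofReal_mul, Complex.exp_ofReal_mul_I_re]
    ring
  have hk2 : (1 : ℝ) ≤ (k : ℝ) ^ 2 := by
    have : (1 : ℤ) ≤ k ^ 2 := (one_le_sq_iff_one_le_abs k).2 (Int.one_le_abs hk)
    exact_mod_cast this
  rw [heatSymbol, Complex.norm_exp, hre, Real.exp_le_exp]
  nlinarith [mul_nonneg (mul_nonneg (by positivity : (0 : ℝ) ≤ (2 * π) ^ 2) hcos) hs,
    mul_nonneg (sub_nonneg.2 hμ) hs]

lemma norm_duhamel_le {θ μ : ℝ} (hcos : 0 ≤ Real.cos θ) (hμ : μ ≤ (2 * π) ^ 2 * Real.cos θ)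
    {k : ℤ} (hk : k ≠ 0) {t : ℝ} (ht : 0 ≤ t) (c : ℂ) {f : ℝ → ℂ} {g : ℝ → ℝ}
    (hg : IntervalIntegrable g volume 0 t) (hfg : ∀ τ ∈ Set.Icc 0 t, ‖f τ‖ ≤ g τ) :
    ‖heatSymbol θ k t * c + ∫ τ in (0 : ℝ)..t, heatSymbol θ k (t - τ) * f τ‖ ≤
      Real.exp (-μ * t) * ‖c‖ + ∫ τ in (0 : ℝ)..t, Real.exp (-μ * (t - τ)) * g τ := by
  refine (norm_add_le _ _).trans (add_le_add ?_ ?_)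
  · rw [norm_mul]
    exact mul_le_mul_of_nonneg_right (norm_heatSymbol_le hcos hμ hk ht) (norm_nonneg _)
  · refine intervalIntegral.norm_integral_le_of_norm_le ht
      (Eventually.of_forall fun τ hτ => ?_) (hg.continuousOn_mul (by fun_prop))
    rw [norm_mul]
    exact mul_le_mul (norm_heatSymbol_le hcos hμ hk (sub_nonneg.2 hτ.2))
      (hfg τ (Set.Ioc_subset_Icc_self hτ)) (norm_nonneg _) (Real.exp_nonneg _)

lemma norm_le_add_integral_of_forall_apply_le {x ξ : ell1} {N : ℝ → ell1} {g : ℝ → ℝ}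
    {a t : ℝ} (ha : 0 ≤ a) (ht : 0 ≤ t) (hg : ContinuousOn g (Set.Icc 0 t))
    (hg0 : ∀ τ ∈ Set.Icc 0 t, 0 ≤ g τ) (hN : ContinuousOn N (Set.Icc 0 t))
    (h : ∀ k, ‖x k‖ ≤ a * ‖ξ k‖ + ∫ τ in (0 : ℝ)..t, g τ * ‖N τ k‖) :
    ‖x‖ ≤ a * ‖ξ‖ + ∫ τ in (0 : ℝ)..t, g τ * ‖N τ‖ := by
  have hcoord (k : ℤ) : ContinuousOn (fun τ => g τ * ‖N τ k‖) (Set.Icc 0 t) :=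
    hg.mul ((lp.lipschitzWith_one_eval 1 k).continuous.comp_continuousOn hN).norm
  have hrhs : 0 ≤ a * ‖ξ‖ + ∫ τ in (0 : ℝ)..t, g τ * ‖N τ‖ :=
    add_nonneg (by positivity)
      (intervalIntegral.integral_nonneg ht fun τ hτ => mul_nonneg (hg0 τ hτ) (norm_nonneg _))
  refine ell1.norm_le_of_forall_sum_le hrhs fun s => ?_
  calc ∑ k ∈ s, ‖x k‖
      ≤ ∑ k ∈ s, (a * ‖ξ k‖ + ∫ τ in (0 : ℝ)..t, g τ * ‖N τ k‖) :=
        Finset.sum_le_sum fun k _ => h k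
    _ = a * ∑ k ∈ s, ‖ξ k‖ + ∫ τ in (0 : ℝ)..t, ∑ k ∈ s, g τ * ‖N τ k‖ := by
        rw [Finset.sum_add_distrib, Finset.mul_sum, intervalIntegral.integral_finsetSum
          fun k _ => (hcoord k).intervalIntegrable_of_Icc ht]
    _ ≤ a * ‖ξ‖ + ∫ τ in (0 : ℝ)..t, g τ * ‖N τ‖ := by
        refine add_le_add (mul_le_mul_of_nonneg_left (ell1.sum_norm_le_norm ξ s) ha)
          (intervalIntegral.integral_mono_on ht
            ((continuousOn_finsetSum s fun k _ => hcoord k).intervalIntegrable_of_Icc ht)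
            ((hg.mul hN.norm).intervalIntegrable_of_Icc ht) fun τ hτ => ?_)
        rw [← Finset.mul_sum]
        exact mul_le_mul_of_nonneg_left (ell1.sum_norm_le_norm _ s) (hg0 τ hτ)

lemma norm_le_of_duhamel {θ μ : ℝ} (hcos : 0 ≤ Real.cos θ) (hμ : μ ≤ (2 * π) ^ 2 * Real.cos θ)
    {t : ℝ} (ht : 0 ≤ t) {x ξ : ell1} (hx0 : x 0 = 0) {F : ℝ → ℤ → ℂ} {N : ℝ → ell1}
    (hN : ContinuousOn N (Set.Icc 0 t)) (hFN : ∀ τ ∈ Set.Icc 0 t, ∀ k, ‖F τ k‖ ≤ ‖N τ k‖)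
    (hx : ∀ k ≠ 0, x k = heatSymbol θ k t * ξ k +
      ∫ τ in (0 : ℝ)..t, heatSymbol θ k (t - τ) * F τ k) :
    ‖x‖ ≤ Real.exp (-μ * t) * ‖ξ‖ + ∫ τ in (0 : ℝ)..t, Real.exp (-μ * (t - τ)) * ‖N τ‖ := by
  refine norm_le_add_integral_of_forall_apply_le (Real.exp_nonneg _) ht (by fun_prop)
    (fun τ _ => Real.exp_nonneg _) hN fun k => ?_
  rcases eq_or_ne k 0 with rfl | hk
  · rw [hx0, norm_zero]
    exact add_nonneg (by positivity) (intervalIntegral.integral_nonneg ht fun τ _ => by positivity)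
  · rw [hx k hk]
    have hNk : ContinuousOn (fun τ => ‖N τ k‖) (Set.Icc 0 t) :=
      ((lp.lipschitzWith_one_eval 1 k).continuous.comp_continuousOn hN).norm
    exact norm_duhamel_le hcos hμ hk ht _ (hNk.intervalIntegrable_of_Icc ht) fun τ hτ => hFN τ hτ k

lemma le_mul_exp_of_le_add_integral {u : ℝ → ℝ} {a K : ℝ} (hu : ContinuousOn u (Set.Ici 0))
    (hK : 0 ≤ K) (h : ∀ t ≥ 0, u t ≤ a + K * ∫ τ in (0 : ℝ)..t, u τ) {t : ℝ} (ht : 0 ≤ t) :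
    u t ≤ a * Real.exp (K * t) := by
  -- extending `u` by `u 0` to the left makes its primitive differentiable everywhere
  set v : ℝ → ℝ := fun τ => u (max τ 0)
  have hv : Continuous v :=
    hu.comp_continuous (continuous_id.max continuous_const) fun τ => le_max_right τ 0
  have hvu : ∀ τ ≥ 0, v τ = u τ := fun τ hτ => by simp only [v, max_eq_left hτ]
  set G : ℝ → ℝ := fun s => ∫ τ in (0 : ℝ)..s, v τ
  have hG (s : ℝ) : HasDerivAt G (v s) s := (hv.integral_hasStrictDerivAt 0 s).hasDerivAt
  have hGu : ∀ s ≥ 0, G s = ∫ τ in (0 : ℝ)..s, u τ := fun s hs =>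
    intervalIntegral.integral_congr fun τ hτ => hvu τ (by rw [Set.uIcc_of_le hs] at hτ; exact hτ.1)
  have hGt : G t ≤ gronwallBound 0 K a (t - 0) :=
    le_gronwallBound_of_liminf_deriv_right_le (fun s _ => (hG s).continuousAt.continuousWithinAt)
      (fun s _ r hr => (hG s).hasDerivWithinAt.liminf_right_slope_le hr) (by simp [G])
      (fun s hs => by rw [hvu s hs.1, hGu s hs.1]; linarith [h s hs.1]) t ⟨ht, le_rfl⟩
  have hbound : K * gronwallBound 0 K a t = a * (Real.exp (K * t) - 1) := by
    rcases eq_or_ne K 0 with rfl | hK0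
    · simp
    · rw [gronwallBound_of_K_ne_0 hK0]; field_simp; ring
  calc u t ≤ a + K * G t := by rw [hGu t ht]; exact h t ht
    _ ≤ a + K * gronwallBound 0 K a (t - 0) := by gcongr
    _ = a * Real.exp (K * t) := by rw [sub_zero, hbound]; ring

lemma le_exp_mul_of_le_exp_add_integral {u : ℝ → ℝ} {a μ K : ℝ} (hu : ContinuousOn u (Set.Ici 0))
    (hK : 0 ≤ K)
    (h : ∀ t ≥ 0, u t ≤ Real.exp (-μ * t) * a +
      K * ∫ τ in (0 : ℝ)..t, Real.exp (-μ * (t - τ)) * u τ) {t : ℝ} (ht : 0 ≤ t) :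
    u t ≤ Real.exp (-(μ - K) * t) * a := by
  have hw : Real.exp (μ * t) * u t ≤ a * Real.exp (K * t) := by
    refine le_mul_exp_of_le_add_integral (u := fun s => Real.exp (μ * s) * u s)
      ((by fun_prop : Continuous fun s => Real.exp (μ * s)).continuousOn.mul hu) hK
      (fun s hs => ?_) ht
    have hexp : ∫ τ in (0 : ℝ)..s, Real.exp (μ * τ) * u τ =
        Real.exp (μ * s) * ∫ τ in (0 : ℝ)..s, Real.exp (-μ * (s - τ)) * u τ := by
      rw [← intervalIntegral.integral_const_mul]
      congr 1 with τ
      rw [← mul_assoc, ← Real.exp_add]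
      congr 2
      ring
    calc Real.exp (μ * s) * u s
        ≤ Real.exp (μ * s) * (Real.exp (-μ * s) * a +
          K * ∫ τ in (0 : ℝ)..s, Real.exp (-μ * (s - τ)) * u τ) := by gcongr; exact h s hs
      _ = a + K * ∫ τ in (0 : ℝ)..s, Real.exp (μ * τ) * u τ := by
        rw [hexp, mul_add, ← mul_assoc, ← Real.exp_add, neg_mul, add_neg_cancel, Real.exp_zero,
          one_mul]
        ring
  calc u t = Real.exp (-μ * t) * (Real.exp (μ * t) * u t) := by
        rw [← mul_assoc, ← Real.exp_add, neg_mul, neg_add_cancel, Real.exp_zero, one_mul]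
    _ ≤ Real.exp (-μ * t) * (a * Real.exp (K * t)) := by gcongr
    _ = Real.exp (-(μ - K) * t) * a := by
        rw [show -(μ - K) * t = -μ * t + K * t by ring, Real.exp_add]; ring

theorem mild_solution_decay_general
    (θ rc rs ρ : ℝ) (hθ : θ ∈ Set.Ioo (-(π / 2)) (π / 2))
    (hrc : 0 < rc) (hrs : 0 < rs) (hρ : 0 < ρ)
    (μ δ₁ : ℝ) (hμ : μ = (2 * π) ^ 2 * Real.cos θ)
    (hδ₁ : δ₁ = 2 * rc + (1 + 2 * ρ) * rs)
    (α : ℂ → ell1 → ℂ) (hα : memB θ ρ rc rs α)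
    (φ : ℂ) (hφ : φ ∈ Bc θ rc) (ξ : ell1)
    (x : ℝ → ell1) (hx : MildSolution θ rs α φ ξ x) :
    ∀ t : ℝ, 0 ≤ t → ‖x t‖ ≤ Real.exp (-(μ - δ₁) * t) * ‖ξ‖ := by
  obtain ⟨hxc, hxB, hxeq⟩ := hx
  subst hμ hδ₁
  have hcos : 0 ≤ Real.cos θ := Real.cos_nonneg_of_mem_Icc (Set.Ioo_subset_Icc_self hθ)
  have hΦ : Set.MapsTo (fun τ => PhiC θ τ φ) (Set.Ici 0) (Bc θ rc) := fun τ hτ =>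
    PhiC_mem_Bc hφ hτ
  set N : ℝ → ell1 := fun τ => stableQuadratic (α (PhiC θ τ φ) (x τ)) (x τ)
  have hN : ContinuousOn N (Set.Ici 0) := continuousOn_stableQuadratic
    (continuousOn_comp_of_memB hα (continuousOn_PhiC hφ) hxc hΦ hxB) hxc
  refine fun t ht => le_exp_mul_of_le_exp_add_integral hxc.norm (by positivity)
    (fun t ht => ?_) ht
  have hNt : ContinuousOn N (Set.Icc 0 t) := hN.mono Set.Icc_subset_Ici_self
  have hxt : ContinuousOn x (Set.Icc 0 t) := hxc.mono Set.Icc_subset_Ici_self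
  refine (norm_le_of_duhamel (F := fun τ k => Ns θ (α (PhiC θ τ φ) (x τ)) (x τ) k) hcos le_rfl ht
    (hxB t ht).2 hNt (fun τ hτ k => norm_Ns_le θ _ (hxB τ hτ.1).2 k)
    fun k hk => hxeq k hk t ht).trans (add_le_add le_rfl ?_)
  rw [← intervalIntegral.integral_const_mul]
  refine intervalIntegral.integral_mono_on ht
    ((by fun_prop : ContinuousOn _ _).intervalIntegrable_of_Icc ht)
    ((by fun_prop : ContinuousOn _ _).intervalIntegrable_of_Icc ht) fun τ hτ => ?_
  rw [mul_left_comm]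
  exact mul_le_mul_of_nonneg_left
    (norm_stableQuadratic_le_of_memB hα hρ.le hrs.le (hΦ hτ.1) (hxB τ hτ.1)) (Real.exp_nonneg _)

/-- Decay of mild solutions on the stable modes (Proposition 6.7 of the paper):
`‖x(t)‖ ≤ e^{−(μ−δ₁)t} ‖ξ‖` with `δ₁ = 2r_c + (1+2ρ)r_s < μ = ω²cos θ`. -/
theorem mild_solution_decay
    (θ rc rs ρ : ℝ) (hθ : θ ∈ Set.Ioo (-(π / 2)) (π / 2))
    (hrc : 0 < rc) (hrs : 0 < rs) (hρ : 0 < ρ)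
    (μ δ₁ : ℝ) (hμ : μ = (2 * π) ^ 2 * Real.cos θ)
    (hδ₁ : δ₁ = 2 * rc + (1 + 2 * ρ) * rs) (hδμ : δ₁ < μ)
    (α : ℂ → ell1 → ℂ) (hα : memB θ ρ rc rs α)
    (φ : ℂ) (hφ : φ ∈ Bc θ rc) (ξ : ell1) (hξ : ξ ∈ Bs rs)
    (x : ℝ → ell1) (hx : MildSolution θ rs α φ ξ x) :
    ∀ t : ℝ, 0 ≤ t → ‖x t‖ ≤ Real.exp (-(μ - δ₁) * t) * ‖ξ‖ :=
  mild_solution_decay_general θ rc rs ρ hθ hrc hrs hρ μ δ₁ hμ hδ₁ α hα φ hφ ξ x hx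
end

section
/- Fix θ ∈ (−π/2, π/2) and r_c, r_s, ρ > 0. Let B_c = {x ∈ ℂ : |x| ≤ r_c, Re(e^{iθ}x) ≤ 0} and let B_s be the closed ball of radius r_s centered at 0 in X_s. Let α : B_c × B_s → ℂ be continuous with α(φ, 0) = φ for all φ ∈ B_c and |α(φ, ξ₁) − α(φ, ξ₂)| ≤ ρ ‖ξ₁ − ξ₂‖ for all φ ∈ B_c, ξ₁, ξ₂ ∈ B_s, and suppose that for each fixed ξ ∈ B_s the map φ ↦ α(φ, ξ) is injective on B_c. Define U = {(x_c, x_s) ∈ B_c × B_s : ρ ‖x_s‖ < dist(x_c, ∂B_c)}, where ∂B_c is the boundary of B_c in ℂ. Then for every (φ₀, ξ) ∈ U there exists φ ∈ B_c such that α(φ, ξ) = φ₀; that is, U ⊆ {(α(x_c, x_s), x_s) : (x_c, x_s) ∈ B_c × B_s}. -/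
open Real

open Set Metric

/-- Two continuous determinations of `2πiℤ`-valued functions on `[0,1]` agree at the
endpoints. -/
lemma aux_exp_one_const {d : ℝ → ℂ} (hc : ContinuousOn d (Icc 0 1))
    (h1 : ∀ t ∈ Icc (0:ℝ) 1, Complex.exp (d t) = 1) : d 1 = d 0 := by
  by_contra hne
  -- images of the imaginary part
  have him : ContinuousOn (fun t => (d t).im) (Icc 0 1) :=
    Complex.continuous_im.comp_continuousOn hc
  have hpre : IsPreconnected ((fun t => (d t).im) '' Icc 0 1) :=
    (isPreconnected_Icc).image _ him
  have hval : ∀ t ∈ Icc (0:ℝ) 1, ∃ n : ℤ, (d t).im = 2 * π * n ∧ (d t).re = 0 := by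
    intro t ht
    obtain ⟨n, hn⟩ := Complex.exp_eq_one_iff.mp (h1 t ht)
    refine ⟨n, ?_, ?_⟩
    · rw [hn]; simp [Complex.mul_im]; ring
    · rw [hn]; simp [Complex.mul_re]
  obtain ⟨n₁, hn₁, hre₁⟩ := hval 1 (by norm_num)
  obtain ⟨n₀, hn₀, hre₀⟩ := hval 0 (by norm_num)
  have hnn : n₀ ≠ n₁ := by
    rintro rfl
    exact hne (Complex.ext (hre₁.trans hre₀.symm) (hn₁.trans hn₀.symm))
  -- get two distinct multiples of 2π in a preconnected subset of 2πℤ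
  have key : ∀ a b : ℤ, a < b → ((2:ℝ) * π * a) ∈ ((fun t => (d t).im) '' Icc 0 1) →
      ((2:ℝ) * π * b) ∈ ((fun t => (d t).im) '' Icc 0 1) → False := by
    intro a b hab ha hb
    have hmem : (2 * π * a + π) ∈ Icc ((2:ℝ) * π * a) (2 * π * b) := by
      constructor
      · nlinarith [pi_pos]
      · have : (a : ℝ) + 1 ≤ b := by exact_mod_cast hab
        nlinarith [pi_pos]
    have := hpre.Icc_subset ha hb hmem
    obtain ⟨t, ht, hval'⟩ := this
    obtain ⟨m, hm, -⟩ := hval t ht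
    have hval'' : (d t).im = 2 * π * a + π := hval'
    rw [hm] at hval''
    have : (2:ℝ) * m = 2 * a + 1 := by
      have h5 : π * (2 * (m:ℝ)) = π * (2 * a + 1) := by linarith
      exact mul_left_cancel₀ pi_ne_zero h5
    have : (2 : ℝ) * m - 2 * a = 1 := by linarith
    have : ((2 * m - 2 * a : ℤ) : ℝ) = ((1 : ℤ) : ℝ) := by push_cast; linarith
    have := Int.cast_injective this
    omega
  have hmem₀ : ((2:ℝ) * π * n₀) ∈ ((fun t => (d t).im) '' Icc 0 1) :=
    ⟨0, by norm_num, by simpa using hn₀⟩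
  have hmem₁ : ((2:ℝ) * π * n₁) ∈ ((fun t => (d t).im) '' Icc 0 1) :=
    ⟨1, by norm_num, by simpa using hn₁⟩
  rcases lt_or_gt_of_ne hnn with h | h
  · exact key n₀ n₁ h hmem₀ hmem₁
  · exact key n₁ n₀ h hmem₁ hmem₀

/-- `Wnd γ w` : the loop `γ` on `[0,1]` has a continuous logarithm whose endpoint
difference is `w` (i.e. `w = 2πi · winding number`). -/
def Wnd (γ : ℝ → ℂ) (w : ℂ) : Prop :=
  ∃ L : ℝ → ℂ, ContinuousOn L (Icc 0 1) ∧ (∀ t ∈ Icc (0:ℝ) 1, Complex.exp (L t) = γ t)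
    ∧ L 1 - L 0 = w

lemma Wnd.unique {γ : ℝ → ℂ} {w w' : ℂ} (h : Wnd γ w) (h' : Wnd γ w') : w = w' := by
  obtain ⟨L, hLc, hLe, hLw⟩ := h
  obtain ⟨L', hLc', hLe', hLw'⟩ := h'
  have key : L 1 - L' 1 = L 0 - L' 0 := by
    apply aux_exp_one_const (d := fun t => L t - L' t) (hLc.sub hLc')
    intro t ht
    have h₁ := hLe t ht
    have h₂ := hLe' t ht
    rw [Complex.exp_sub, h₁, h₂, div_self]
    rw [← h₁]; exact Complex.exp_ne_zero _
  rw [← hLw, ← hLw']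
  linear_combination key

lemma Wnd.close {γ₁ γ₂ : ℝ → ℂ} {w : ℂ} (h : Wnd γ₁ w)
    (hc₂ : ContinuousOn γ₂ (Icc 0 1))
    (hclose : ∀ t ∈ Icc (0:ℝ) 1, ‖γ₂ t - γ₁ t‖ < ‖γ₁ t‖)
    (hloop₁ : γ₁ 1 = γ₁ 0) (hloop₂ : γ₂ 1 = γ₂ 0) : Wnd γ₂ w := by
  obtain ⟨L, hLc, hLe, hLw⟩ := h
  have hne₁ : ∀ t ∈ Icc (0:ℝ) 1, γ₁ t ≠ 0 := by
    intro t ht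
    rw [← hLe t ht]; exact Complex.exp_ne_zero _
  have hc₁ : ContinuousOn γ₁ (Icc 0 1) :=
    (Complex.continuous_exp.comp_continuousOn hLc).congr fun t ht => (hLe t ht).symm
  set r : ℝ → ℂ := fun t => γ₂ t / γ₁ t with hr
  have hrball : ∀ t ∈ Icc (0:ℝ) 1, ‖r t - 1‖ < 1 := by
    intro t ht
    have h1 : ‖γ₁ t‖ ≠ 0 :=
      norm_ne_zero_iff.mpr (hne₁ t ht)
    show ‖γ₂ t / γ₁ t - 1‖ < 1
    have : γ₂ t / γ₁ t - 1 = (γ₂ t - γ₁ t) / γ₁ t := by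
      field_simp [hne₁ t ht]
    rw [this, norm_div, div_lt_one (lt_of_le_of_ne (norm_nonneg _) (Ne.symm h1))]
    exact hclose t ht
  have hrslit : ∀ t ∈ Icc (0:ℝ) 1, r t ∈ Complex.slitPlane := by
    intro t ht
    rw [Complex.mem_slitPlane_iff]
    left
    have := hrball t ht
    have habs : |(r t - 1).re| ≤ ‖r t - 1‖ := Complex.abs_re_le_norm _
    have h3 : (r t - 1).re > -1 := by
      have := abs_lt.mp (lt_of_le_of_lt habs this)
      linarith [this.1]
    have h4 : (r t).re - 1 > -1 := by simpa [Complex.sub_re] using h3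
    linarith
  have hrc : ContinuousOn r (Icc 0 1) := hc₂.div hc₁ (hne₁)
  refine ⟨fun t => L t + Complex.log (r t), ?_, ?_, ?_⟩
  · exact hLc.add (fun t ht =>
      (continuousAt_clog (hrslit t ht)).comp_continuousWithinAt (hrc t ht))
  · intro t ht
    have hrne : r t ≠ 0 := by
      intro h0
      have := hrball t ht
      rw [h0] at this
      simp at this
    rw [Complex.exp_add, hLe t ht, Complex.exp_log hrne]
    show γ₁ t * (γ₂ t / γ₁ t) = γ₂ t
    rw [mul_comm, div_mul_cancel₀ _ (hne₁ t ht)]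
  · have hr10 : r 1 = r 0 := by show γ₂ 1 / γ₁ 1 = γ₂ 0 / γ₁ 0; rw [hloop₁, hloop₂]
    show L 1 + Complex.log (r 1) - (L 0 + Complex.log (r 0)) = w
    rw [hr10, ← hLw]; ring

lemma Wnd.const {c : ℂ} (hc : c ≠ 0) : Wnd (fun _ => c) 0 :=
  ⟨fun _ => Complex.log c, continuousOn_const, fun _ _ => Complex.exp_log hc, sub_self _⟩

lemma Wnd.circle {ρ : ℝ} (hρ : 0 < ρ) :
    Wnd (fun t : ℝ => (ρ : ℂ) * Complex.exp (2 * π * Complex.I * t)) (2 * π * Complex.I) := by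
  refine ⟨fun t => (Real.log ρ : ℂ) + 2 * π * Complex.I * t, ?_, ?_, by push_cast; ring⟩
  · apply continuousOn_const.add
    exact (continuous_const.mul (Complex.continuous_ofReal)).continuousOn
  · intro t _
    rw [Complex.exp_add]
    congr 1
    rw [← Complex.ofReal_exp, Real.exp_log hρ]

lemma Wnd.homotopy {H : ℝ → ℝ → ℂ} {w : ℂ}
    (hc : ContinuousOn (fun p : ℝ × ℝ => H p.1 p.2) (Icc 0 1 ×ˢ Icc 0 1))
    (hne : ∀ s ∈ Icc (0:ℝ) 1, ∀ t ∈ Icc (0:ℝ) 1, H s t ≠ 0)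
    (hloop : ∀ s ∈ Icc (0:ℝ) 1, H s 1 = H s 0)
    (h0 : Wnd (H 0) w) : Wnd (H 1) w := by
  have hK : IsCompact (Icc (0:ℝ) 1 ×ˢ Icc (0:ℝ) 1) := isCompact_Icc.prod isCompact_Icc
  -- minimum of |H|
  obtain ⟨p₀, hp₀, hmin⟩ := hK.exists_isMinOn (⟨(0,0), by norm_num⟩)
    ((continuous_norm.comp_continuousOn hc))
  set m : ℝ := ‖H p₀.1 p₀.2‖ with hm
  rw [Set.mem_prod] at hp₀
  have hmpos : 0 < m := norm_pos_iff.mpr (hne p₀.1 hp₀.1 p₀.2 hp₀.2)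
  have hlb : ∀ s ∈ Icc (0:ℝ) 1, ∀ t ∈ Icc (0:ℝ) 1, m ≤ ‖H s t‖ :=
    fun s hs t ht => hmin (Set.mk_mem_prod hs ht)
  -- uniform continuity
  have huc := hK.uniformContinuousOn_of_continuous hc
  obtain ⟨δ, hδpos, hδ⟩ := Metric.uniformContinuousOn_iff.mp huc m hmpos
  -- number of steps
  obtain ⟨N, hN⟩ := exists_nat_gt (1 / δ)
  have hNpos : 0 < (N : ℝ) + 1 := by positivity
  have hstep : 1 / ((N : ℝ) + 1) < δ := by
    have h1 : 1 < (N:ℝ) * δ := (div_lt_iff₀ hδpos).mp hN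
    rw [div_lt_iff₀ hNpos]
    nlinarith
  have hmem : ∀ i : ℕ, i ≤ N + 1 → (i : ℝ) / ((N : ℝ) + 1) ∈ Icc (0:ℝ) 1 := by
    intro i hi
    constructor
    · positivity
    · rw [div_le_one hNpos]
      exact_mod_cast hi
  have hcurry : ∀ s ∈ Icc (0:ℝ) 1, ContinuousOn (H s) (Icc 0 1) := by
    intro s hs
    have : ContinuousOn (fun t : ℝ => (s, t)) (Icc 0 1) :=
      (continuous_const.prodMk continuous_id).continuousOn
    exact hc.comp this (fun t ht => Set.mk_mem_prod hs ht)
  have key : ∀ i : ℕ, i ≤ N + 1 → Wnd (H ((i : ℝ) / ((N : ℝ) + 1))) w := by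
    intro i
    induction i with
    | zero => intro _; simpa using h0
    | succ k ih =>
      intro hk
      have hk' : k ≤ N + 1 := by omega
      have hks : (k : ℝ) / ((N : ℝ) + 1) ∈ Icc (0:ℝ) 1 := hmem k hk'
      have hks' : ((k + 1 : ℕ) : ℝ) / ((N : ℝ) + 1) ∈ Icc (0:ℝ) 1 := hmem (k+1) hk
      refine Wnd.close (ih hk') (hcurry _ hks') ?_ (hloop _ hks) (hloop _ hks')
      intro t ht
      have hdist : dist (H (((k+1 : ℕ):ℝ)/((N:ℝ)+1)) t) (H ((k:ℝ)/((N:ℝ)+1)) t) < m := by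
        apply hδ (((k+1:ℕ):ℝ)/((N:ℝ)+1), t) (Set.mk_mem_prod hks' ht)
          (((k:ℝ)/((N:ℝ)+1)), t) (Set.mk_mem_prod hks ht)
        have hd : dist (((k+1:ℕ):ℝ)/((N:ℝ)+1)) ((k:ℝ)/((N:ℝ)+1)) < δ := by
          rw [Real.dist_eq]
          push_cast
          rw [div_sub_div_same]
          have h1 : ((k:ℝ) + 1 - k) = 1 := by ring
          rw [h1, abs_of_nonneg (by positivity)]
          exact hstep
        rw [Prod.dist_eq]
        simp only [dist_self]
        exact max_lt hd hδpos
      rw [Complex.dist_eq] at hdist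
      exact lt_of_lt_of_le hdist (hlb _ hks t ht)
  have := key (N + 1) le_rfl
  have h1 : ((N + 1 : ℕ) : ℝ) / ((N : ℝ) + 1) = 1 := by
    push_cast; field_simp
  rwa [h1] at this

lemma Wnd.congr {γ₁ γ₂ : ℝ → ℂ} {w : ℂ} (h : Wnd γ₁ w)
    (he : ∀ t ∈ Icc (0:ℝ) 1, γ₁ t = γ₂ t) : Wnd γ₂ w := by
  obtain ⟨L, hLc, hLe, hLw⟩ := h
  exact ⟨L, hLc, fun t ht => (hLe t ht).trans (he t ht), hLw⟩

/-- Brouwer fixed point theorem for closed disks in `ℂ`. -/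
lemma brouwer_closedBall (c : ℂ) (r : ℝ) (hr : 0 < r) (g : ℂ → ℂ)
    (hg : ContinuousOn g (closedBall c r))
    (hmaps : Set.MapsTo g (closedBall c r) (closedBall c r)) :
    ∃ x ∈ closedBall c r, g x = x := by
  by_contra hfix
  push_neg at hfix
  set e : ℝ → ℂ := fun t => Complex.exp (2 * π * Complex.I * t) with he
  have habse : ∀ t : ℝ, ‖e t‖ = 1 := by
    intro t
    rw [he]
    simp [Complex.norm_exp]
  have hece : Continuous e :=
    Complex.continuous_exp.comp (continuous_const.mul Complex.continuous_ofReal)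
  have heloop : e 1 = e 0 := by
    show Complex.exp (2 * π * Complex.I * ((1:ℝ):ℂ)) = Complex.exp (2 * π * Complex.I * ((0:ℝ):ℂ))
    push_cast
    rw [mul_one, mul_zero, Complex.exp_zero, Complex.exp_two_pi_mul_I]
  have hmem : ∀ s ∈ Icc (0:ℝ) 1, ∀ t : ℝ, c + (s : ℂ) * (r : ℂ) * e t ∈ closedBall c r := by
    intro s hs t
    rw [mem_closedBall, Complex.dist_eq]
    have : c + (s : ℂ) * (r : ℂ) * e t - c = (s : ℂ) * (r : ℂ) * e t := by ring
    rw [this]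
    rw [norm_mul, norm_mul, habse, mul_one, Complex.norm_real, Complex.norm_real,
      Real.norm_eq_abs, Real.norm_eq_abs, abs_of_nonneg hs.1, abs_of_nonneg hr.le]
    nlinarith [hs.2]
  have hmem' : ∀ t : ℝ, c + (r : ℂ) * e t ∈ closedBall c r := by
    intro t
    have := hmem 1 (by norm_num) t
    simpa using this
  -- First homotopy : from the constant loop `c - g c` to `A`.
  set A : ℝ → ℂ := fun t => (c + (r : ℂ) * e t) - g (c + (r : ℂ) * e t) with hA
  have claim1 : Wnd A 0 := by
    set H : ℝ → ℝ → ℂ := fun s t =>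
      (c + (s : ℂ) * (r : ℂ) * e t) - g (c + (s : ℂ) * (r : ℂ) * e t) with hH
    have hφcont : Continuous fun p : ℝ × ℝ => c + ((p.1 : ℂ)) * (r : ℂ) * e p.2 :=
      continuous_const.add (((Complex.continuous_ofReal.comp continuous_fst).mul
        continuous_const).mul (hece.comp continuous_snd))
    have hφmaps : ∀ p : ℝ × ℝ, p ∈ Icc (0:ℝ) 1 ×ˢ Icc (0:ℝ) 1 →
        c + ((p.1 : ℂ)) * (r : ℂ) * e p.2 ∈ closedBall c r := fun p hp => hmem p.1 hp.1 p.2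
    have hHc : ContinuousOn (fun p : ℝ × ℝ => H p.1 p.2) (Icc 0 1 ×ˢ Icc 0 1) := by
      exact (hφcont.continuousOn).sub (hg.comp hφcont.continuousOn hφmaps)
    have hHne : ∀ s ∈ Icc (0:ℝ) 1, ∀ t ∈ Icc (0:ℝ) 1, H s t ≠ 0 := by
      intro s hs t _
      exact sub_ne_zero_of_ne (Ne.symm (hfix _ (hmem s hs t)))
    have hHloop : ∀ s ∈ Icc (0:ℝ) 1, H s 1 = H s 0 := by
      intro s _
      simp only [hH, heloop]
    have h0 : Wnd (H 0) 0 := by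
      apply (Wnd.const (c := c - g c) (sub_ne_zero_of_ne
        (Ne.symm (hfix c (mem_closedBall_self hr.le))))).congr
      intro t _
      simp [hH]
    have := Wnd.homotopy hHc hHne hHloop h0
    apply this.congr
    intro t _
    simp only [hH, hA, Complex.ofReal_one, one_mul]
  -- Second homotopy : from the circle loop to `A`.
  have claim2 : Wnd A (2 * π * Complex.I) := by
    set H : ℝ → ℝ → ℂ := fun s t =>
      (r : ℂ) * e t - (s : ℂ) * (g (c + (r : ℂ) * e t) - c) with hH
    have hφcont : Continuous fun p : ℝ × ℝ => c + ((r : ℂ)) * e p.2 :=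
      continuous_const.add (continuous_const.mul (hece.comp continuous_snd))
    have hHc : ContinuousOn (fun p : ℝ × ℝ => H p.1 p.2) (Icc 0 1 ×ˢ Icc 0 1) := by
      apply ContinuousOn.sub
      · exact (continuous_const.mul (hece.comp continuous_snd)).continuousOn
      · exact ((Complex.continuous_ofReal.comp continuous_fst).continuousOn).mul
          (((hg.comp hφcont.continuousOn (fun p _ => hmem' p.2))).sub continuousOn_const)
    have hHne : ∀ s ∈ Icc (0:ℝ) 1, ∀ t ∈ Icc (0:ℝ) 1, H s t ≠ 0 := by
      intro s hs t _ h0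
      have hx : c + (r : ℂ) * e t ∈ closedBall c r := hmem' t
      have hgx : ‖g (c + (r : ℂ) * e t) - c‖ ≤ r := by
        have := hmaps hx
        rw [mem_closedBall, Complex.dist_eq] at this
        exact this
      have heq : (r : ℂ) * e t = (s : ℂ) * (g (c + (r : ℂ) * e t) - c) :=
        sub_eq_zero.mp h0
      have habs : r = s * ‖g (c + (r : ℂ) * e t) - c‖ := by
        have := congrArg (‖·‖) heq
        rwa [norm_mul, norm_mul, habse, mul_one, Complex.norm_real, Complex.norm_real,
          Real.norm_eq_abs, Real.norm_eq_abs, abs_of_nonneg hs.1, abs_of_nonneg hr.le] at this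
      have hs1 : s = 1 := by nlinarith [hs.2, hs.1]
      rw [hs1] at heq
      simp only [Complex.ofReal_one, one_mul] at heq
      have hgxx : g (c + (r:ℂ) * e t) = c + (r:ℂ) * e t := by linear_combination -heq
      exact hfix _ hx hgxx
    have hHloop : ∀ s ∈ Icc (0:ℝ) 1, H s 1 = H s 0 := by
      intro s _
      simp only [hH, heloop]
    have h0 : Wnd (H 0) (2 * π * Complex.I) := by
      apply (Wnd.circle hr).congr
      intro t _
      simp [hH, he]
    have := Wnd.homotopy hHc hHne hHloop h0
    apply this.congr
    intro t _
    simp only [hH, hA, Complex.ofReal_one, one_mul]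
    ring
  have : (0 : ℂ) = 2 * π * Complex.I := claim1.unique claim2
  have hne : (2 * (π:ℂ) * Complex.I) ≠ 0 := by
    simp [Real.pi_ne_zero, Complex.I_ne_zero, Complex.ofReal_ne_zero]
  exact hne this.symm

lemma isClosed_Bc (θ rc : ℝ) : IsClosed (Bc θ rc) := by
  have h1 : IsClosed {x : ℂ | ‖x‖ ≤ rc} :=
    isClosed_le continuous_norm continuous_const
  have h2 : IsClosed {x : ℂ | (Complex.exp (θ * Complex.I) * x).re ≤ 0} :=
    isClosed_le (Complex.continuous_re.comp (continuous_const.mul continuous_id))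
      continuous_const
  exact h1.inter h2


/-- The skew-image covering statement (Corollary 6.3 of the paper): the set
`U = {(x_c,x_s) : ρ‖x_s‖ < dist(x_c, ∂B_c)}` is contained in the `α`-skew image
of `B_c × B_s`. -/
theorem skew_image_covering
    (θ rc rs ρ : ℝ) (hθ : θ ∈ Set.Ioo (-(π / 2)) (π / 2))
    (hrc : 0 < rc) (hrs : 0 < rs) (hρ : 0 < ρ)
    (α : ℂ → ell1 → ℂ)
    (hcont : ContinuousOn (fun p : ℂ × ell1 => α p.1 p.2) (Bc θ rc ×ˢ Bs rs))
    (hα0 : ∀ φ ∈ Bc θ rc, α φ 0 = φ)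
    (hlip : ∀ φ ∈ Bc θ rc, ∀ ξ₁ ∈ Bs rs, ∀ ξ₂ ∈ Bs rs,
      ‖α φ ξ₁ - α φ ξ₂‖ ≤ ρ * ‖ξ₁ - ξ₂‖)
    (hinj : ∀ ξ ∈ Bs rs, Set.InjOn (fun φ => α φ ξ) (Bc θ rc)) :
    ∀ φ₀ ∈ Bc θ rc, ∀ ξ ∈ Bs rs,
      ρ * ‖ξ‖ < Metric.infDist φ₀ (frontier (Bc θ rc)) →
      ∃ φ ∈ Bc θ rc, α φ ξ = φ₀ := by
  intro φ₀ hφ₀ ξ hξ hlt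
  by_cases hξ0 : ξ = 0
  · exact ⟨φ₀, hφ₀, by rw [hξ0]; exact hα0 φ₀ hφ₀⟩
  set ε := ρ * ‖ξ‖ with hε
  have hεpos : 0 < ε := mul_pos hρ (norm_pos_iff.mpr hξ0)
  have hK : IsClosed (Bc θ rc) := isClosed_Bc θ rc
  have hφ₀int : φ₀ ∈ interior (Bc θ rc) := by
    by_contra h
    have hf : φ₀ ∈ frontier (Bc θ rc) := by
      rw [hK.frontier_eq]; exact ⟨hφ₀, h⟩
    have h0 := Metric.infDist_zero_of_mem hf
    rw [h0] at hlt
    nlinarith [norm_nonneg ξ, hρ.le]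
  have hball : Metric.closedBall φ₀ ε ⊆ Bc θ rc := by
    intro z hz
    by_contra hzK
    have hseg : segment ℝ φ₀ z ⊆ Metric.closedBall φ₀ ε :=
      (convex_closedBall φ₀ ε).segment_subset (Metric.mem_closedBall_self hεpos.le) hz
    have hpre : IsPreconnected (segment ℝ φ₀ z) := (convex_segment φ₀ z).isPreconnected
    have hsub : segment ℝ φ₀ z ⊆ interior (Bc θ rc) ∪ (Bc θ rc)ᶜ := by
      intro w hw
      by_cases hwK : w ∈ Bc θ rc
      · left
        by_contra hwint
        have hwf : w ∈ frontier (Bc θ rc) := by rw [hK.frontier_eq]; exact ⟨hwK, hwint⟩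
        have h1 : Metric.infDist φ₀ (frontier (Bc θ rc)) ≤ dist φ₀ w :=
          Metric.infDist_le_dist_of_mem hwf
        have h2 : dist φ₀ w ≤ ε := by
          have := hseg hw
          rwa [Metric.mem_closedBall, dist_comm] at this
        linarith
      · right; exact hwK
    have h1 := hpre (interior (Bc θ rc)) ((Bc θ rc)ᶜ) isOpen_interior hK.isOpen_compl hsub
      ⟨φ₀, left_mem_segment ℝ φ₀ z, hφ₀int⟩ ⟨z, right_mem_segment ℝ φ₀ z, hzK⟩
    obtain ⟨w, -, hw1, hw2⟩ := h1
    exact hw2 (interior_subset hw1)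
  have h0Bs : (0 : ell1) ∈ Bs rs := by
    constructor
    · simp [hrs.le]
    · simp
  set g : ℂ → ℂ := fun x => x - α x ξ + φ₀ with hg
  have hgc : ContinuousOn g (Metric.closedBall φ₀ ε) := by
    apply ContinuousOn.add ?_ continuousOn_const
    apply ContinuousOn.sub continuousOn_id
    exact hcont.comp (continuousOn_id.prodMk continuousOn_const)
      (fun x hx => Set.mk_mem_prod (hball hx) hξ)
  have hgmaps : Set.MapsTo g (Metric.closedBall φ₀ ε) (Metric.closedBall φ₀ ε) := by
    intro x hx
    have hxK := hball hx
    rw [Metric.mem_closedBall, Complex.dist_eq]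
    have hdiff : g x - φ₀ = α x 0 - α x ξ := by
      rw [hg]
      simp only
      rw [hα0 x hxK]
      ring
    rw [hdiff]
    calc ‖α x 0 - α x ξ‖ ≤ ρ * ‖(0:ell1) - ξ‖ := hlip x hxK 0 h0Bs ξ hξ
    _ = ε := by rw [zero_sub, norm_neg]
  obtain ⟨x, hxball, hgx⟩ := brouwer_closedBall φ₀ ε hεpos g hgc hgmaps
  refine ⟨x, hball hxball, ?_⟩
  have hgx' : x - α x ξ + φ₀ = x := hgx
  linear_combination -hgx'
end

section
/- Let h > 0, 0 ≤ s ≤ h, μ > 0, and let A, B : [0,h] → [0,∞) be continuous with A(τ) ≤ B(τ) for all τ. Set Ā₂ = sup_{τ∈[0,h]} A(τ), Ā₁ = sup_{τ∈[0,h]} B(τ), and assume 2Ā₁ ≠ μ. Define W^∞(t,τ) = exp(−μ(t−τ) + 2∫_τ^t B(σ)dσ), W_∞ = (e^{(2Ā₁−μ)h} − 1)/(2Ā₁ − μ), W̄_∞ = (W_∞ − h)/(2Ā₁ − μ), and W_∞^sup = 1 if μ ≥ 2Ā₁ and e^{(2Ā₁−μ)h} otherwise. Let W_m ≥ 0 and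 assume κ := 1 − 4 W_m W̄_∞ Ā₂² > 0. Suppose p, q : [s,h] → [0,∞) are continuous and satisfy, for constants P_m, P_∞ ≥ 0 and all t ∈ [s,h]: p(t) ≤ W_m P_m + 2 W_m ∫_s^t A(τ) q(τ) dτ, and q(t) ≤ W^∞(t,s) P_∞ + 2 ∫_s^t W^∞(t,τ) A(τ) p(τ) dτ. Then sup_{t∈[s,h]} p(t) ≤ κ^{−1}(W_m P_m + 2 W_m W_∞ Ā₂ P_∞) and sup_{t∈[s,h]} q(t) ≤ 2 W_m W_∞ Ā₂ κ^{−1} P_m + (W_∞^sup + 4 W_m W_∞² Ā₂² κ^{−1}) P_∞. -/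
/-!
Let `P = max p` on `[s, h]` and `c = 2Ā₁ - μ`. Since `B ≤ Ā₁`, the tail kernel is dominated by
`e^{c(t-τ)}`, so the second inequality gives `q(t) ≤ e^{c(t-s)} P_∞ + 2 Ā₂ P G(t-s)` with
`G(v) = ∫₀^v e^{cu} du`. Feeding this into the first inequality at a maximum point of `p` yields
`P ≤ W_m P_m + 2 W_m Ā₂ W_∞ P_∞ + 4 W_m Ā₂² W̄_∞ P`, because `W_∞ = G(h)` and `W̄_∞ = ∫₀^h G`.
As `κ > 0` this solves for `P`, and substituting back bounds `q`.
-/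

open Real MeasureTheory intervalIntegral Set

/-- Unlike `intervalIntegral.integral_mono_on`, `f` need not be integrable: otherwise its
integral is `0`. -/
theorem intervalIntegral.integral_mono_on_of_nonneg {f g : ℝ → ℝ} {a b : ℝ} (hab : a ≤ b)
    (hf : ∀ x ∈ Icc a b, 0 ≤ f x) (hg : IntervalIntegrable g volume a b)
    (hfg : ∀ x ∈ Icc a b, f x ≤ g x) :
    ∫ x in a..b, f x ≤ ∫ x in a..b, g x := by
  rw [integral_of_le hab, integral_of_le hab]
  have hIoc : ∀ᵐ x ∂volume.restrict (Ioc a b), x ∈ Icc a b :=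
    (ae_restrict_mem measurableSet_Ioc).mono fun x hx => Ioc_subset_Icc_self hx
  exact integral_mono_of_nonneg (hIoc.mono hf) hg.1 (hIoc.mono hfg)

/-- `W_∞ = expIntegral (2Ā₁ - μ) h` and `W̄_∞ = expIntegral₂ (2Ā₁ - μ) h`. -/
noncomputable def expIntegral (c v : ℝ) : ℝ := ∫ u in 0..v, exp (c * u)

noncomputable def expIntegral₂ (c v : ℝ) : ℝ := ∫ u in 0..v, expIntegral c u

section expIntegral

variable {c v w : ℝ}

theorem intervalIntegrable_exp_mul (c a b : ℝ) :
    IntervalIntegrable (fun u => exp (c * u)) volume a b :=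
  (continuous_exp.comp (continuous_const_mul c)).intervalIntegrable a b

theorem continuous_expIntegral (c : ℝ) : Continuous (expIntegral c) :=
  continuous_primitive (intervalIntegrable_exp_mul c) 0

theorem expIntegral_eq (hc : c ≠ 0) (v : ℝ) : expIntegral c v = (exp (c * v) - 1) / c := by
  rw [expIntegral, integral_comp_mul_left (fun x => exp x) hc, integral_exp, smul_eq_mul,
    mul_zero, exp_zero]
  ring

theorem expIntegral₂_eq (hc : c ≠ 0) (v : ℝ) :
    expIntegral₂ c v = (expIntegral c v - v) / c := by
  simp only [expIntegral₂, expIntegral_eq hc]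
  rw [intervalIntegral.integral_div,
    integral_sub (intervalIntegrable_exp_mul c 0 v) intervalIntegrable_const, ← expIntegral,
    expIntegral_eq hc, intervalIntegral.integral_const, smul_eq_mul, mul_one, sub_zero]

theorem expIntegral_mono (c : ℝ) : Monotone (expIntegral c) := by
  intro v w hvw
  have hdiff := integral_interval_sub_left (intervalIntegrable_exp_mul c 0 w)
    (intervalIntegrable_exp_mul c 0 v)
  have hnonneg : 0 ≤ ∫ u in v..w, exp (c * u) :=
    integral_nonneg hvw fun u _ => (exp_pos _).le
  simp only [expIntegral]
  linarith

theorem expIntegral_nonneg (hv : 0 ≤ v) : 0 ≤ expIntegral c v := by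
  simpa [expIntegral] using expIntegral_mono c hv

theorem expIntegral₂_le (hv : 0 ≤ v) (hvw : v ≤ w) : expIntegral₂ c v ≤ expIntegral₂ c w :=
  integral_mono_interval le_rfl hv hvw
    ((ae_restrict_mem measurableSet_Ioc).mono fun _ hu => expIntegral_nonneg hu.1.le)
    ((continuous_expIntegral c).intervalIntegrable 0 w)

theorem integral_exp_mul_sub_left (c s t : ℝ) :
    ∫ τ in s..t, exp (c * (t - τ)) = expIntegral c (t - s) := by
  rw [integral_comp_sub_left (fun u => exp (c * u)), sub_self, expIntegral]

theorem integral_exp_mul_sub_right (c s t : ℝ) :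
    ∫ τ in s..t, exp (c * (τ - s)) = expIntegral c (t - s) := by
  rw [integral_comp_sub_right (fun u => exp (c * u)), sub_self, expIntegral]

theorem integral_expIntegral_sub_right (c s t : ℝ) :
    ∫ τ in s..t, expIntegral c (τ - s) = expIntegral₂ c (t - s) := by
  rw [integral_comp_sub_right (expIntegral c), sub_self, expIntegral₂]

theorem exp_mul_le_ite {h : ℝ} (hv : v ∈ Icc 0 h) :
    exp (c * v) ≤ if c ≤ 0 then 1 else exp (c * h) := by
  split_ifs with hc
  · exact exp_le_one_iff.mpr (mul_nonpos_of_nonpos_of_nonneg hc hv.1)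
  · exact exp_le_exp.mpr (mul_le_mul_of_nonneg_left hv.2 (not_le.mp hc).le)

end expIntegral

theorem IsCompact.le_sSup_image {α : Type*} [TopologicalSpace α] {K : Set α} {f : α → ℝ}
    {x : α} (hK : IsCompact K) (hf : ContinuousOn f K) (hx : x ∈ K) : f x ≤ sSup (f '' K) :=
  le_csSup (hK.bddAbove_image hf) (mem_image_of_mem f hx)

theorem exp_neg_mul_add_two_integral_le {B : ℝ → ℝ} {μ K τ t : ℝ} (hτt : τ ≤ t)
    (hB : IntervalIntegrable B volume τ t) (hBK : ∀ σ ∈ Icc τ t, B σ ≤ K) :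
    exp (-μ * (t - τ) + 2 * ∫ σ in τ..t, B σ) ≤ exp ((2 * K - μ) * (t - τ)) := by
  have hint : ∫ σ in τ..t, B σ ≤ (t - τ) * K := by
    simpa using integral_mono_on hτt hB intervalIntegrable_const hBK
  exact exp_le_exp.mpr (by linarith)

section Duhamel

variable {A B p q : ℝ → ℝ} {s h t μ K a c P X Y : ℝ}

theorem duhamel_tail_le (ht : t ∈ Icc s h) (hB : ContinuousOn B (Icc s h))
    (hBK : ∀ σ ∈ Icc s h, B σ ≤ K) (hA : ∀ τ ∈ Icc s h, 0 ≤ A τ ∧ A τ ≤ a)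
    (hp : ∀ τ ∈ Icc s h, 0 ≤ p τ ∧ p τ ≤ P) (hX : 0 ≤ X) :
    exp (-μ * (t - s) + 2 * ∫ σ in s..t, B σ) * X +
        2 * ∫ τ in s..t, exp (-μ * (t - τ) + 2 * ∫ σ in τ..t, B σ) * A τ * p τ
      ≤ exp ((2 * K - μ) * (t - s)) * X + 2 * (a * P) * expIntegral (2 * K - μ) (t - s) := by
  have hsub : ∀ τ ∈ Icc s t, Icc τ t ⊆ Icc s h := fun τ hτ => Icc_subset_Icc hτ.1 ht.2
  have hkernel : ∀ τ ∈ Icc s t,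
      exp (-μ * (t - τ) + 2 * ∫ σ in τ..t, B σ) ≤ exp ((2 * K - μ) * (t - τ)) :=
    fun τ hτ => exp_neg_mul_add_two_integral_le hτ.2
      ((hB.mono (hsub τ hτ)).intervalIntegrable_of_Icc hτ.2) fun σ hσ => hBK σ (hsub τ hτ hσ)
  have hs : s ∈ Icc s t := ⟨le_rfl, ht.1⟩
  have ha : 0 ≤ a := (hA s (hsub s hs hs)).1.trans (hA s (hsub s hs hs)).2
  have hintegral : ∫ τ in s..t, exp (-μ * (t - τ) + 2 * ∫ σ in τ..t, B σ) * A τ * p τ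
      ≤ ∫ τ in s..t, exp ((2 * K - μ) * (t - τ)) * (a * P) := by
    refine integral_mono_on_of_nonneg ht.1 (fun τ hτ => ?_)
      ((continuous_exp.comp ((continuous_const_mul _).comp
        (continuous_sub_left t))).mul continuous_const |>.intervalIntegrable s t)
      fun τ hτ => ?_
    all_goals
      obtain ⟨hA0, hAa⟩ := hA τ (hsub s hs hτ)
      obtain ⟨hp0, hpP⟩ := hp τ (hsub s hs hτ)
    · positivity
    · rw [mul_assoc]
      exact mul_le_mul (hkernel τ hτ) (mul_le_mul hAa hpP hp0 ha) (by positivity) (exp_pos _).le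
  rw [intervalIntegral.integral_mul_const, integral_exp_mul_sub_left] at hintegral
  have hhom := mul_le_mul_of_nonneg_right (hkernel s hs) hX
  linarith

theorem integral_mul_le_of_le_exp_add_expIntegral (ht : t ∈ Icc s h)
    (hA : ∀ τ ∈ Icc s h, 0 ≤ A τ ∧ A τ ≤ a)
    (hq : ∀ τ ∈ Icc s h, 0 ≤ q τ ∧ q τ ≤ exp (c * (τ - s)) * X + Y * expIntegral c (τ - s)) :
    ∫ τ in s..t, A τ * q τ ≤ a * (expIntegral c (t - s) * X + Y * expIntegral₂ c (t - s)) := by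
  have hsub : Icc s t ⊆ Icc s h := Icc_subset_Icc_right ht.2
  have ha : 0 ≤ a := (hA s ⟨le_rfl, ht.1.trans ht.2⟩).1.trans (hA s ⟨le_rfl, ht.1.trans ht.2⟩).2
  have hexp : Continuous fun τ => exp (c * (τ - s)) * X :=
    (continuous_exp.comp ((continuous_const_mul c).comp (continuous_sub_right s))).mul
      continuous_const
  have hG : Continuous fun τ => Y * expIntegral c (τ - s) :=
    continuous_const.mul ((continuous_expIntegral c).comp (continuous_sub_right s))
  calc ∫ τ in s..t, A τ * q τ
      ≤ ∫ τ in s..t, a * (exp (c * (τ - s)) * X + Y * expIntegral c (τ - s)) :=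
        integral_mono_on_of_nonneg ht.1
          (fun τ hτ => mul_nonneg (hA τ (hsub hτ)).1 (hq τ (hsub hτ)).1)
          ((continuous_const.mul (hexp.add hG)).intervalIntegrable s t)
          fun τ hτ => mul_le_mul (hA τ (hsub hτ)).2 (hq τ (hsub hτ)).2 (hq τ (hsub hτ)).1 ha
    _ = a * (expIntegral c (t - s) * X + Y * expIntegral₂ c (t - s)) := by
      rw [intervalIntegral.integral_const_mul,
        integral_add (hexp.intervalIntegrable s t) (hG.intervalIntegrable s t),
        intervalIntegral.integral_mul_const, intervalIntegral.integral_const_mul,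
        integral_exp_mul_sub_right, integral_expIntegral_sub_right]

end Duhamel

theorem coupled_finite_tail_estimate_general
    (h s μ : ℝ) (hs0 : 0 ≤ s) (hsh : s ≤ h)
    (A B : ℝ → ℝ)
    (hA : ContinuousOn A (Set.Icc 0 h)) (hB : ContinuousOn B (Set.Icc 0 h))
    (hA0 : ∀ τ ∈ Set.Icc (0:ℝ) h, 0 ≤ A τ)
    (A₂ A₁ : ℝ)
    (hA₂ : A₂ = sSup (A '' Set.Icc 0 h)) (hA₁ : A₁ = sSup (B '' Set.Icc 0 h))
    (hne : 2 * A₁ ≠ μ)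
    (Winf Wbar Wsup Wm κ : ℝ)
    (hWinf : Winf = (Real.exp ((2 * A₁ - μ) * h) - 1) / (2 * A₁ - μ))
    (hWbar : Wbar = (Winf - h) / (2 * A₁ - μ))
    (hWsup : Wsup = if 2 * A₁ ≤ μ then 1 else Real.exp ((2 * A₁ - μ) * h))
    (hWm : 0 ≤ Wm) (hκ : κ = 1 - 4 * Wm * Wbar * A₂ ^ 2) (hκpos : 0 < κ)
    (p q : ℝ → ℝ)
    (hp : ContinuousOn p (Set.Icc s h))
    (hp0 : ∀ t ∈ Set.Icc s h, 0 ≤ p t) (hq0 : ∀ t ∈ Set.Icc s h, 0 ≤ q t)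
    (Pm Pinf : ℝ) (hPinf : 0 ≤ Pinf)
    (hpb : ∀ t ∈ Set.Icc s h,
      p t ≤ Wm * Pm + 2 * Wm * ∫ τ in s..t, A τ * q τ)
    (hqb : ∀ t ∈ Set.Icc s h,
      q t ≤ Real.exp (-μ * (t - s) + 2 * ∫ σ in s..t, B σ) * Pinf +
        2 * ∫ τ in s..t, Real.exp (-μ * (t - τ) + 2 * ∫ σ in τ..t, B σ) * A τ * p τ) :
    (∀ t ∈ Set.Icc s h, p t ≤ κ⁻¹ * (Wm * Pm + 2 * Wm * Winf * A₂ * Pinf)) ∧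
    (∀ t ∈ Set.Icc s h,
      q t ≤ 2 * Wm * Winf * A₂ * κ⁻¹ * Pm +
        (Wsup + 4 * Wm * Winf ^ 2 * A₂ ^ 2 * κ⁻¹) * Pinf) := by
  set c := 2 * A₁ - μ
  have hc : c ≠ 0 := sub_ne_zero.mpr hne
  replace hWinf : Winf = expIntegral c h := by rw [hWinf, expIntegral_eq hc]
  replace hWbar : Wbar = expIntegral₂ c h := by rw [hWbar, hWinf, expIntegral₂_eq hc]
  have hWinf_ge : ∀ t ∈ Icc s h, expIntegral c (t - s) ≤ Winf := fun t ht =>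
    hWinf ▸ expIntegral_mono c (by linarith [ht.2])
  have hsub : Icc s h ⊆ Icc 0 h := Icc_subset_Icc_left hs0
  have hA_bd : ∀ τ ∈ Icc s h, 0 ≤ A τ ∧ A τ ≤ A₂ := fun τ hτ =>
    ⟨hA0 τ (hsub hτ), hA₂ ▸ isCompact_Icc.le_sSup_image hA (hsub hτ)⟩
  have hB_le : ∀ τ ∈ Icc s h, B τ ≤ A₁ := fun τ hτ =>
    hA₁ ▸ isCompact_Icc.le_sSup_image hB (hsub hτ)
  obtain ⟨t₀, ht₀, hmax⟩ := isCompact_Icc.exists_isMaxOn (nonempty_Icc.2 hsh) hp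
  set P := p t₀
  have hq_le : ∀ t ∈ Icc s h,
      q t ≤ exp (c * (t - s)) * Pinf + 2 * (A₂ * P) * expIntegral c (t - s) := fun t ht =>
    (hqb t ht).trans <| duhamel_tail_le ht (hB.mono hsub) hB_le hA_bd
      (fun τ hτ => ⟨hp0 τ hτ, hmax hτ⟩) hPinf
  have hA₂0 : 0 ≤ A₂ := (hA_bd s ⟨le_rfl, hsh⟩).1.trans (hA_bd s ⟨le_rfl, hsh⟩).2
  have hP0 : 0 ≤ P := hp0 t₀ ht₀
  have hWbar_ge : expIntegral₂ c (t₀ - s) ≤ Wbar :=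
    hWbar ▸ expIntegral₂_le (sub_nonneg.2 ht₀.1) (by linarith [ht₀.2])
  have hIq : ∫ τ in s..t₀, A τ * q τ ≤ A₂ * (Winf * Pinf + 2 * (A₂ * P) * Wbar) := by
    grw [integral_mul_le_of_le_exp_add_expIntegral ht₀ hA_bd fun τ hτ => ⟨hq0 τ hτ, hq_le τ hτ⟩,
      hWinf_ge t₀ ht₀, hWbar_ge]
  have hP : P ≤ κ⁻¹ * (Wm * Pm + 2 * Wm * Winf * A₂ * Pinf) := by
    rw [inv_mul_eq_div, le_div_iff₀ hκpos, hκ]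
    nlinarith [hpb t₀ ht₀, mul_le_mul_of_nonneg_left hIq hWm]
  have hWsup_ge : ∀ t ∈ Icc s h, exp (c * (t - s)) ≤ Wsup := fun t ht => by
    simp only [hWsup, ← sub_nonpos (a := 2 * A₁)]
    exact exp_mul_le_ite ⟨sub_nonneg.2 ht.1, by linarith [ht.2]⟩
  have hWinf0 : 0 ≤ Winf := hWinf ▸ expIntegral_nonneg (hs0.trans hsh)
  refine ⟨fun t ht => (hmax ht).trans hP, fun t ht => ?_⟩
  calc q t ≤ Wsup * Pinf + 2 * A₂ * Winf * P := by
        grw [hq_le t ht, hWsup_ge t ht, hWinf_ge t ht]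
        linarith
    _ ≤ Wsup * Pinf + 2 * A₂ * Winf * (κ⁻¹ * (Wm * Pm + 2 * Wm * Winf * A₂ * Pinf)) := by
      gcongr
    _ = 2 * Wm * Winf * A₂ * κ⁻¹ * Pm + (Wsup + 4 * Wm * Winf ^ 2 * A₂ ^ 2 * κ⁻¹) * Pinf := by
      ring

/-- Coupled a priori estimate for finite and tail parts of the linearized evolution
(the quantitative core of Theorem 3.1 of the paper). -/
theorem coupled_finite_tail_estimate
    (h s μ : ℝ) (hh : 0 < h) (hs0 : 0 ≤ s) (hsh : s ≤ h) (hμ : 0 < μ)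
    (A B : ℝ → ℝ)
    (hA : ContinuousOn A (Set.Icc 0 h)) (hB : ContinuousOn B (Set.Icc 0 h))
    (hA0 : ∀ τ ∈ Set.Icc (0:ℝ) h, 0 ≤ A τ)
    (hAB : ∀ τ ∈ Set.Icc (0:ℝ) h, A τ ≤ B τ)
    (A₂ A₁ : ℝ)
    (hA₂ : A₂ = sSup (A '' Set.Icc 0 h)) (hA₁ : A₁ = sSup (B '' Set.Icc 0 h))
    (hne : 2 * A₁ ≠ μ)
    (Winf Wbar Wsup Wm κ : ℝ)
    (hWinf : Winf = (Real.exp ((2 * A₁ - μ) * h) - 1) / (2 * A₁ - μ))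
    (hWbar : Wbar = (Winf - h) / (2 * A₁ - μ))
    (hWsup : Wsup = if 2 * A₁ ≤ μ then 1 else Real.exp ((2 * A₁ - μ) * h))
    (hWm : 0 ≤ Wm) (hκ : κ = 1 - 4 * Wm * Wbar * A₂ ^ 2) (hκpos : 0 < κ)
    (p q : ℝ → ℝ)
    (hp : ContinuousOn p (Set.Icc s h)) (hq : ContinuousOn q (Set.Icc s h))
    (hp0 : ∀ t ∈ Set.Icc s h, 0 ≤ p t) (hq0 : ∀ t ∈ Set.Icc s h, 0 ≤ q t)
    (Pm Pinf : ℝ) (hPm : 0 ≤ Pm) (hPinf : 0 ≤ Pinf)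
    (hpb : ∀ t ∈ Set.Icc s h,
      p t ≤ Wm * Pm + 2 * Wm * ∫ τ in s..t, A τ * q τ)
    (hqb : ∀ t ∈ Set.Icc s h,
      q t ≤ Real.exp (-μ * (t - s) + 2 * ∫ σ in s..t, B σ) * Pinf +
        2 * ∫ τ in s..t, Real.exp (-μ * (t - τ) + 2 * ∫ σ in τ..t, B σ) * A τ * p τ) :
    (∀ t ∈ Set.Icc s h, p t ≤ κ⁻¹ * (Wm * Pm + 2 * Wm * Winf * A₂ * Pinf)) ∧
    (∀ t ∈ Set.Icc s h,
      q t ≤ 2 * Wm * Winf * A₂ * κ⁻¹ * Pm +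
        (Wsup + 4 * Wm * Winf ^ 2 * A₂ ^ 2 * κ⁻¹) * Pinf) :=
  coupled_finite_tail_estimate_general h s μ hs0 hsh A B hA hB hA0 A₂ A₁ hA₂ hA₁ hne Winf Wbar Wsup
    Wm κ hWinf hWbar hWsup hWm hκ hκpos p q hp hp0 hq0 Pm Pinf hPinf hpb hqb
end
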